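/- arXiv:1608.05768 — 3 statements merged into one kernel-verified Lean document; each statement's English description precedes it below -/
import Mathlib

section
/- Let f : 2^D → ℝ be submodular on a finite set D = {1,...,n} with f(∅) = 0, and let v_j = f({1,...,j}) − f({1,...,j−1}). Then for every subset S ⊆ D, ∑_{j∈S} v_j ≤ f(S), with equality when S = {1,...,k} for any k ≤ n. -/
/-- the greedy point of a submodular function satisfies all the
polyhedron inequalities, with equality on every prefix {1,...,k}. -/
theorem greedy_point_ineq_and_prefix_eq (n : ℕ) (f : Finset (Fin n) → ℝ)
    (hzero : f ∅ = 0)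
    (hsub : ∀ S T : Finset (Fin n), f (S ∪ T) + f (S ∩ T) ≤ f S + f T) :
    (∀ S : Finset (Fin n),
      ∑ j ∈ S, (f (Finset.univ.filter fun i => i ≤ j) -
          f (Finset.univ.filter fun i => i < j)) ≤ f S) ∧
    (∀ k : ℕ, k ≤ n →
      ∑ j ∈ Finset.univ.filter (fun i : Fin n => (i : ℕ) < k),
          (f (Finset.univ.filter fun i => i ≤ j) -
            f (Finset.univ.filter fun i => i < j))
        = f (Finset.univ.filter fun i : Fin n => (i : ℕ) < k)) := by
  set P : ℕ → Finset (Fin n) := fun k => Finset.univ.filter (fun i : Fin n => (i : ℕ) < k) with hP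
  have hle : ∀ j : Fin n, (Finset.univ.filter fun i => i ≤ j) = P ((j : ℕ) + 1) := by
    intro j
    ext i
    simp only [hP, Finset.mem_filter, Finset.mem_univ, true_and, Fin.le_def, Nat.lt_succ_iff]
  have hlt : ∀ j : Fin n, (Finset.univ.filter fun i => i < j) = P (j : ℕ) := by
    intro j
    ext i
    simp only [hP, Finset.mem_filter, Finset.mem_univ, true_and, Fin.lt_def]
  have hP0 : P 0 = ∅ := by
    ext i; simp only [hP, Finset.mem_filter, Finset.mem_univ, true_and, Finset.notMem_empty,
      iff_false]; omega
  have hPsucc : ∀ k, ∀ hk : k < n, P (k + 1) = insert ⟨k, hk⟩ (P k) := by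
    intro k hk
    ext i
    simp only [hP, Finset.mem_filter, Finset.mem_univ, true_and, Finset.mem_insert]
    constructor
    · intro h
      rcases Nat.lt_succ_iff_lt_or_eq.mp h with h | h
      · exact Or.inr h
      · exact Or.inl (Fin.ext h)
    · rintro (rfl | h)
      · simp
      · omega
  have hknot : ∀ k, ∀ hk : k < n, (⟨k, hk⟩ : Fin n) ∉ P k := by
    intro k hk
    simp only [hP, Finset.mem_filter, Finset.mem_univ, true_and, Fin.val_mk]
    omega
  -- the main induction: for every S and every k ≤ n
  have main : ∀ S : Finset (Fin n), ∀ k, k ≤ n →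
      ∑ j ∈ S.filter (fun j : Fin n => (j : ℕ) < k), (f (P ((j : ℕ) + 1)) - f (P (j : ℕ)))
        ≤ f (S.filter (fun j : Fin n => (j : ℕ) < k)) := by
    intro S k
    induction k with
    | zero => intro _; simp [hzero]
    | succ k ih =>
      intro hk
      have hkn : k < n := hk
      have ih' := ih (le_of_lt hk)
      by_cases hmem : (⟨k, hkn⟩ : Fin n) ∈ S
      · have hfil : S.filter (fun j : Fin n => (j : ℕ) < k + 1)
            = insert ⟨k, hkn⟩ (S.filter (fun j : Fin n => (j : ℕ) < k)) := by
          ext i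
          simp only [Finset.mem_filter, Finset.mem_insert]
          constructor
          · rintro ⟨hi, h⟩
            rcases Nat.lt_succ_iff_lt_or_eq.mp h with h | h
            · exact Or.inr ⟨hi, h⟩
            · exact Or.inl (Fin.ext h)
          · rintro (rfl | ⟨hi, h⟩)
            · exact ⟨hmem, by simp⟩
            · exact ⟨hi, by omega⟩
        have hnot : (⟨k, hkn⟩ : Fin n) ∉ S.filter (fun j : Fin n => (j : ℕ) < k) := by
          simp
        rw [hfil, Finset.sum_insert hnot]
        -- submodularity step
        have hsub' := hsub (insert ⟨k, hkn⟩ (S.filter (fun j : Fin n => (j : ℕ) < k))) (P k)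
        have hU : insert (⟨k, hkn⟩ : Fin n) (S.filter (fun j : Fin n => (j : ℕ) < k)) ∪ P k
            = P (k + 1) := by
          rw [hPsucc k hkn]
          ext i
          simp only [Finset.mem_union, Finset.mem_insert, Finset.mem_filter, hP,
            Finset.mem_univ, true_and]
          tauto
        have hI : insert (⟨k, hkn⟩ : Fin n) (S.filter (fun j : Fin n => (j : ℕ) < k)) ∩ P k
            = S.filter (fun j : Fin n => (j : ℕ) < k) := by
          ext i
          simp only [Finset.mem_inter, Finset.mem_insert, Finset.mem_filter, hP,
            Finset.mem_univ, true_and]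
          constructor
          · rintro ⟨h1 | h1, h2⟩
            · exact absurd h2 (by subst h1; simp)
            · exact h1
          · intro h; exact ⟨Or.inr h, h.2⟩
        rw [hU, hI] at hsub'
        simp only [Fin.val_mk]
        linarith
      · have hfil : S.filter (fun j : Fin n => (j : ℕ) < k + 1) = S.filter (fun j : Fin n => (j : ℕ) < k) := by
          ext i
          simp only [Finset.mem_filter, and_congr_right_iff]
          intro hi
          constructor
          · intro h
            rcases Nat.lt_succ_iff_lt_or_eq.mp h with h | h
            · exact h
            · exact absurd ((Fin.ext h : i = ⟨k, hkn⟩) ▸ hi) hmem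
          · omega
        rw [hfil]
        exact ih'
  constructor
  · intro S
    have hS : S.filter (fun j : Fin n => (j : ℕ) < n) = S := by
      ext i; simp [i.isLt]
    have := main S n le_rfl
    rw [hS] at this
    calc ∑ j ∈ S, (f (Finset.univ.filter fun i => i ≤ j) -
          f (Finset.univ.filter fun i => i < j))
        = ∑ j ∈ S, (f (P ((j : ℕ) + 1)) - f (P (j : ℕ))) := by
          refine Finset.sum_congr rfl fun j _ => by rw [hle j, hlt j]
      _ ≤ f S := this
  · intro k hk
    have tel : ∀ m, m ≤ n → ∑ j ∈ P m, (f (P ((j : ℕ) + 1)) - f (P (j : ℕ))) = f (P m) := by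
      intro m
      induction m with
      | zero => intro _; simp [hP0, hzero]
      | succ m ih =>
        intro hm
        have hmn : m < n := hm
        rw [hPsucc m hmn, Finset.sum_insert (hknot m hmn), ih (le_of_lt hm)]
        simp only [Fin.val_mk]
        rw [← hPsucc m hmn]
        ring
    have := tel k hk
    calc ∑ j ∈ Finset.univ.filter (fun i : Fin n => (i : ℕ) < k),
          (f (Finset.univ.filter fun i => i ≤ j) - f (Finset.univ.filter fun i => i < j))
        = ∑ j ∈ P k, (f (P ((j : ℕ) + 1)) - f (P (j : ℕ))) := by
          refine Finset.sum_congr rfl fun j _ => by rw [hle j, hlt j]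
      _ = f (P k) := this
end

section
/- Let X₁,...,X_K, Y₁,...,Y_L, Ŷ₁,...,Ŷ_L be finite random variables with joint distribution factoring as (∏_k p(x_k)) · (∏_ℓ p(y_ℓ | x₁,...,x_K)) · (∏_ℓ p(ŷ_ℓ | y_ℓ)). Then for any S ⊆ {1,...,L}, I(Y_S; Ŷ_S | Ŷ_{S^c}) = I(X_K; Ŷ_L) − I(X_K; Ŷ_{S^c}) + ∑_{ℓ∈S} I(Y_ℓ; Ŷ_ℓ | X_K), where X_K = (X₁,...,X_K), Ŷ_L = (Ŷ₁,...,Ŷ_L), and S^c is the complement of S in {1,...,L}. -/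
set_option linter.unusedSectionVars false
set_option maxHeartbeats 1000000


open Finset

/-- Shannon entropy of the random variable `Z` under the pmf `p` on `Ω`. -/
noncomputable def ent {Ω β : Type*} [Fintype Ω] [Fintype β] [DecidableEq β]
    (p : Ω → ℝ) (Z : Ω → β) : ℝ :=
  -∑ b : β, (∑ ω ∈ univ.filter fun ω => Z ω = b, p ω) *
      Real.log (∑ ω ∈ univ.filter fun ω => Z ω = b, p ω)

/-- Mutual information I(A;B) = H(A) + H(B) - H(A,B). -/
noncomputable def mi {Ω β γ : Type*} [Fintype Ω] [Fintype β] [Fintype γ]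
    [DecidableEq β] [DecidableEq γ] (p : Ω → ℝ) (A : Ω → β) (B : Ω → γ) : ℝ :=
  ent p A + ent p B - ent p (fun ω => (A ω, B ω))

/-- Conditional mutual information I(A;B|C) = H(A,C) + H(B,C) - H(A,B,C) - H(C). -/
noncomputable def condMI {Ω β γ δ : Type*} [Fintype Ω] [Fintype β] [Fintype γ] [Fintype δ]
    [DecidableEq β] [DecidableEq γ] [DecidableEq δ]
    (p : Ω → ℝ) (A : Ω → β) (B : Ω → γ) (C : Ω → δ) : ℝ :=
  ent p (fun ω => (A ω, C ω)) + ent p (fun ω => (B ω, C ω))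
    - ent p (fun ω => (A ω, B ω, C ω)) - ent p C


lemma sum_fiber {Ω β : Type*} [Fintype Ω] [Fintype β] [DecidableEq β]
    (p : Ω → ℝ) (V : Ω → β) (g : β → ℝ) :
    ∑ b : β, (∑ ω ∈ univ.filter fun ω => V ω = b, p ω) * g b = ∑ ω, p ω * g (V ω) := by
  rw [← Finset.sum_fiberwise univ V (fun ω => p ω * g (V ω))]
  refine Finset.sum_congr rfl fun b _ => ?_
  rw [Finset.sum_mul]
  refine Finset.sum_congr rfl fun ω hω => ?_
  simp only [mem_filter] at hω
  rw [hω.2]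

lemma ent_comp_inj {Ω β γ : Type*} [Fintype Ω] [Fintype β] [Fintype γ]
    [DecidableEq β] [DecidableEq γ]
    (p : Ω → ℝ) (Z : Ω → β) (g : β → γ) (hg : Function.Injective g) :
    ent p (fun ω => g (Z ω)) = ent p Z := by
  unfold ent
  congr 1
  have h1 : ∑ c : γ, (∑ ω ∈ univ.filter fun ω => g (Z ω) = c, p ω) *
      Real.log (∑ ω ∈ univ.filter fun ω => g (Z ω) = c, p ω)
      = ∑ c ∈ univ.image g, (∑ ω ∈ univ.filter fun ω => g (Z ω) = c, p ω) *
      Real.log (∑ ω ∈ univ.filter fun ω => g (Z ω) = c, p ω) := by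
    refine (Finset.sum_subset (Finset.subset_univ _) ?_).symm
    intro c _ hc
    have : (univ.filter fun ω => g (Z ω) = c) = ∅ := by
      refine Finset.filter_eq_empty_iff.2 fun {ω} _ h => ?_
      exact hc (Finset.mem_image.2 ⟨Z ω, mem_univ _, h⟩)
    rw [this]
    simp
  have h2 : ∑ c ∈ univ.image g, (∑ ω ∈ univ.filter fun ω => g (Z ω) = c, p ω) *
      Real.log (∑ ω ∈ univ.filter fun ω => g (Z ω) = c, p ω)
      = ∑ b : β, (∑ ω ∈ univ.filter fun ω => g (Z ω) = g b, p ω) *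
      Real.log (∑ ω ∈ univ.filter fun ω => g (Z ω) = g b, p ω) :=
    Finset.sum_image (fun a _ b _ h => hg h)
  rw [h1, h2]
  refine Finset.sum_congr rfl fun b _ => ?_
  have : (univ.filter fun ω => g (Z ω) = g b) = (univ.filter fun ω => Z ω = b) := by
    apply Finset.filter_congr
    intro ω _
    simp [hg.eq_iff]
  rw [this]

lemma fiber_pair {Ω β γ : Type*} [Fintype Ω] [Fintype β] [Fintype γ]
    [DecidableEq β] [DecidableEq γ]
    (p : Ω → ℝ) (U : Ω → β) (W : Ω → γ) (u : β) :
    ∑ w : γ, ∑ ω ∈ univ.filter (fun ω => U ω = u ∧ W ω = w), p ω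
      = ∑ ω ∈ univ.filter (fun ω => U ω = u), p ω := by
  rw [← Finset.sum_fiberwise (univ.filter fun ω => U ω = u) W p]
  refine Finset.sum_congr rfl fun w _ => ?_
  rw [Finset.filter_filter]

lemma mul_log_mul (a b : ℝ) :
    a * b * Real.log (a * b) = a * b * Real.log a + a * b * Real.log b := by
  rcases eq_or_ne a 0 with ha | ha
  · simp [ha]
  rcases eq_or_ne b 0 with hb | hb
  · simp [hb]
  rw [Real.log_mul ha hb]; ring

lemma core {Ω β γ : Type*} [Fintype Ω] [Fintype β] [Fintype γ]
    [DecidableEq β] [DecidableEq γ]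
    (p : Ω → ℝ) (U : Ω → β) (W : Ω → γ) (r : β → γ → ℝ)
    (h : ∀ u w, ∑ ω ∈ univ.filter (fun ω => U ω = u ∧ W ω = w), p ω
        = (∑ ω ∈ univ.filter (fun ω => U ω = u), p ω) * r u w) :
    ent p (fun ω => (U ω, W ω)) = ent p U
      - ∑ u : β, (∑ ω ∈ univ.filter (fun ω => U ω = u), p ω) *
          ∑ w : γ, r u w * Real.log (r u w) := by
  have hmarg : ∀ u, (∑ ω ∈ univ.filter (fun ω => U ω = u), p ω) * (∑ w, r u w)
      = ∑ ω ∈ univ.filter (fun ω => U ω = u), p ω := by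
    intro u
    calc (∑ ω ∈ univ.filter (fun ω => U ω = u), p ω) * (∑ w, r u w)
        = ∑ w, (∑ ω ∈ univ.filter (fun ω => U ω = u), p ω) * r u w :=
          Finset.mul_sum _ _ _
      _ = ∑ w : γ, ∑ ω ∈ univ.filter (fun ω => U ω = u ∧ W ω = w), p ω :=
          Finset.sum_congr rfl fun w _ => (h u w).symm
      _ = _ := fiber_pair p U W u
  unfold ent
  rw [Fintype.sum_prod_type]
  have key : ∀ u w, (∑ ω ∈ univ.filter fun ω => (U ω, W ω) = (u, w), p ω)
      = (∑ ω ∈ univ.filter (fun ω => U ω = u), p ω) * r u w := by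
    intro u w
    rw [← h u w]
    congr 1
    apply Finset.filter_congr
    intro ω _
    simp [Prod.ext_iff]
  have main : ∀ u : β, ∑ w : γ,
      (∑ ω ∈ univ.filter fun ω => (U ω, W ω) = (u, w), p ω) *
        Real.log (∑ ω ∈ univ.filter fun ω => (U ω, W ω) = (u, w), p ω)
      = (∑ ω ∈ univ.filter (fun ω => U ω = u), p ω) *
          Real.log (∑ ω ∈ univ.filter (fun ω => U ω = u), p ω)
        + (∑ ω ∈ univ.filter (fun ω => U ω = u), p ω) *
          ∑ w, r u w * Real.log (r u w) := by
    intro u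
    have hpt : ∀ w : γ, (∑ ω ∈ univ.filter fun ω => (U ω, W ω) = (u, w), p ω) *
        Real.log (∑ ω ∈ univ.filter fun ω => (U ω, W ω) = (u, w), p ω)
        = (∑ ω ∈ univ.filter (fun ω => U ω = u), p ω) * r u w *
            Real.log (∑ ω ∈ univ.filter (fun ω => U ω = u), p ω)
          + (∑ ω ∈ univ.filter (fun ω => U ω = u), p ω) *
            (r u w * Real.log (r u w)) := by
      intro w
      rw [key u w, mul_log_mul]
      ring
    rw [Finset.sum_congr rfl fun w _ => hpt w, Finset.sum_add_distrib,
      ← Finset.mul_sum]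
    congr 1
    calc ∑ w, (∑ ω ∈ univ.filter (fun ω => U ω = u), p ω) * r u w *
          Real.log (∑ ω ∈ univ.filter (fun ω => U ω = u), p ω)
        = ((∑ ω ∈ univ.filter (fun ω => U ω = u), p ω) * (∑ w, r u w)) *
          Real.log (∑ ω ∈ univ.filter (fun ω => U ω = u), p ω) := by
          rw [← Finset.sum_mul, ← Finset.mul_sum]
      _ = _ := by rw [hmarg u]
  rw [Finset.sum_congr rfl fun u _ => main u, Finset.sum_add_distrib]
  ring

lemma prod_mul_log_prod {ι : Type*} [Fintype ι] (a : ι → ℝ) :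
    (∏ i, a i) * Real.log (∏ i, a i) = ∑ i, (∏ j, a j) * Real.log (a i) := by
  by_cases h : ∀ i, a i ≠ 0
  · rw [Real.log_prod fun i _ => h i, Finset.mul_sum]
  · push_neg at h
    obtain ⟨i, hi⟩ := h
    have : ∏ j, a j = 0 := Finset.prod_eq_zero (mem_univ i) hi
    simp [this]

lemma hprod {ι κ : Type*} [Fintype ι] [DecidableEq ι] [Fintype κ] (f : ι → κ → ℝ)
    (hf : ∀ i, ∑ x, f i x = 1) :
    ∑ w : ι → κ, (∏ i, f i (w i)) * Real.log (∏ i, f i (w i))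
      = ∑ i, ∑ x, f i x * Real.log (f i x) := by
  classical
  have step1 : ∑ w : ι → κ, (∏ i, f i (w i)) * Real.log (∏ i, f i (w i))
      = ∑ i, ∑ w : ι → κ, (∏ j, f j (w j)) * Real.log (f i (w i)) := by
    rw [Finset.sum_congr rfl fun w _ => prod_mul_log_prod (fun i => f i (w i))]
    exact Finset.sum_comm
  rw [step1]
  refine Finset.sum_congr rfl fun i _ => ?_
  set G : ι → κ → ℝ := fun j x => if j = i then f j x * Real.log (f j x) else f j x with hG
  have hpoint : ∀ w : ι → κ, (∏ j, f j (w j)) * Real.log (f i (w i)) = ∏ j, G j (w j) := by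
    intro w
    rw [← Finset.mul_prod_erase univ (fun j => G j (w j)) (mem_univ i),
      ← Finset.mul_prod_erase univ (fun j => f j (w j)) (mem_univ i)]
    have h1 : G i (w i) = f i (w i) * Real.log (f i (w i)) := by simp [hG]
    have h2 : ∀ j ∈ univ.erase i, G j (w j) = f j (w j) := by
      intro j hj
      simp [hG, (Finset.mem_erase.1 hj).1]
    rw [h1, Finset.prod_congr rfl h2]
    ring
  rw [Finset.sum_congr rfl fun w _ => hpoint w]
  have : ∑ w : ι → κ, ∏ j, G j (w j) = ∏ j, ∑ x, G j x := by
    rw [← Fintype.piFinset_univ, ← Finset.prod_univ_sum]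
  rw [this, ← Finset.mul_prod_erase univ (fun j => ∑ x, G j x) (mem_univ i)]
  have h1 : ∑ x, G i x = ∑ x, f i x * Real.log (f i x) := by simp [hG]
  have h2 : ∀ j ∈ univ.erase i, (∑ x, G j x) = 1 := by
    intro j hj
    rw [show (∑ x, G j x) = ∑ x, f j x by
      refine Finset.sum_congr rfl fun x _ => ?_
      simp [hG, (Finset.mem_erase.1 hj).1]]
    exact hf j
  rw [h1, Finset.prod_congr rfl h2, Finset.prod_const_one, mul_one]

lemma sum_pi_prod {ι κ : Type*} [Fintype ι] [DecidableEq ι] [Fintype κ] (g : ι → κ → ℝ) :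
    ∑ w : ι → κ, ∏ i, g i (w i) = ∏ i, ∑ x, g i x := by
  rw [← Fintype.piFinset_univ, ← Finset.prod_univ_sum]

lemma eval_one {α β : Type*} [Fintype α] [Fintype β] (f : α → ℝ) (g : α → β → ℝ)
    (hf : ∑ a, f a = 1) (hg : ∀ a, ∑ b, g a b = 1) :
    ∑ a, ∑ b, f a * g a b = 1 := by
  have : ∀ a, ∑ b, f a * g a b = f a := fun a => by rw [← Finset.mul_sum, hg a, mul_one]
  rw [Finset.sum_congr rfl fun a _ => this a, hf]

lemma eval_z {α β : Type*} [Fintype α] [Fintype β] [DecidableEq β]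
    (f : α → ℝ) (g : α → β → ℝ) (z0 : β) :
    ∑ a, ∑ b, f a * g a b * (if b = z0 then (1:ℝ) else 0) = ∑ a, f a * g a z0 := by
  refine Finset.sum_congr rfl fun a _ => ?_
  simp [mul_ite]

lemma eval_y {α β : Type*} [Fintype α] [Fintype β] [DecidableEq α]
    (f : α → ℝ) (g : α → β → ℝ) (y0 : α) (hg : ∀ a, ∑ b, g a b = 1) :
    ∑ a, ∑ b, f a * g a b * (if a = y0 then (1:ℝ) else 0) = f y0 := by
  have : ∀ a, ∑ b, f a * g a b * (if a = y0 then (1:ℝ) else 0)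
      = (if a = y0 then f a else 0) := by
    intro a
    rcases eq_or_ne a y0 with h | h
    · simp only [h, if_pos rfl, mul_one, if_true]
      rw [← Finset.mul_sum, hg y0, mul_one]
    · simp [h]
  rw [Finset.sum_congr rfl fun a _ => this a, Finset.sum_ite_eq' univ y0, if_pos (mem_univ _)]

lemma eval_yz {α β : Type*} [Fintype α] [Fintype β] [DecidableEq α] [DecidableEq β]
    (f : α → ℝ) (g : α → β → ℝ) (y0 : α) (z0 : β) :
    ∑ a, ∑ b, f a * g a b * ((if a = y0 then (1:ℝ) else 0) * (if b = z0 then (1:ℝ) else 0))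
      = f y0 * g y0 z0 := by
  have : ∀ a, ∑ b, f a * g a b * ((if a = y0 then (1:ℝ) else 0) * (if b = z0 then (1:ℝ) else 0))
      = (if a = y0 then f a * g a z0 else 0) := by
    intro a
    rcases eq_or_ne a y0 with h | h
    · simp [h, mul_ite]
    · simp [h]
  rw [Finset.sum_congr rfl fun a _ => this a, Finset.sum_ite_eq' univ y0, if_pos (mem_univ _)]

section CRAN

variable {K L : ℕ} {𝒳 𝒴 𝒵 : Type*}
  [Fintype 𝒳] [Fintype 𝒴] [Fintype 𝒵] [DecidableEq 𝒳] [DecidableEq 𝒴] [DecidableEq 𝒵]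
  (pX : Fin K → 𝒳 → ℝ) (pY : Fin L → (Fin K → 𝒳) → 𝒴 → ℝ) (pZ : Fin L → 𝒴 → 𝒵 → ℝ)
  (p : (Fin K → 𝒳) × (Fin L → 𝒴) × (Fin L → 𝒵) → ℝ)

lemma fiberX
    (hfac : ∀ x y z, p (x, y, z) =
      (∏ k, pX k (x k)) * (∏ ℓ, pY ℓ x (y ℓ)) * (∏ ℓ, pZ ℓ (y ℓ) (z ℓ)))
    (x0 : Fin K → 𝒳) (χ : Fin L → 𝒴 → 𝒵 → ℝ)
    (Q : (Fin L → 𝒴) → (Fin L → 𝒵) → Prop) [∀ y z, Decidable (Q y z)]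
    (hQ : ∀ y z, (if Q y z then (1:ℝ) else 0) = ∏ ℓ, χ ℓ (y ℓ) (z ℓ)) :
    ∑ ω ∈ univ.filter (fun ω => ω.1 = x0 ∧ Q ω.2.1 ω.2.2), p ω
      = (∏ k, pX k (x0 k)) * ∏ ℓ, ∑ yv, ∑ zv, pY ℓ x0 yv * pZ ℓ yv zv * χ ℓ yv zv := by
  classical
  rw [Finset.sum_filter, Fintype.sum_prod_type]
  have hx : ∀ x : Fin K → 𝒳, (∑ yz : (Fin L → 𝒴) × (Fin L → 𝒵),
      if x = x0 ∧ Q yz.1 yz.2 then p (x, yz) else 0)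
      = if x = x0 then (∑ yz : (Fin L → 𝒴) × (Fin L → 𝒵),
          if Q yz.1 yz.2 then p (x, yz) else 0) else 0 := by
    intro x
    rcases eq_or_ne x x0 with h | h
    · simp [h]
    · simp [h]
  rw [Finset.sum_congr rfl fun x _ => hx x, Finset.sum_ite_eq' univ x0, if_pos (mem_univ _),
    Fintype.sum_prod_type]
  have hpt : ∀ (y : Fin L → 𝒴) (z : Fin L → 𝒵), (if Q y z then p (x0, (y, z)) else 0)
      = (∏ k, pX k (x0 k)) * ∏ ℓ, (pY ℓ x0 (y ℓ) * pZ ℓ (y ℓ) (z ℓ) * χ ℓ (y ℓ) (z ℓ)) := by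
    intro y z
    have h1 : (if Q y z then p (x0, (y, z)) else 0)
        = p (x0, (y, z)) * (if Q y z then 1 else 0) := by
      rcases em (Q y z) with h | h <;> simp [h]
    rw [h1, hQ y z, hfac x0 y z, Finset.prod_mul_distrib, Finset.prod_mul_distrib]
    ring
  rw [Finset.sum_congr rfl fun y _ => Finset.sum_congr rfl fun z _ => hpt y z]
  have h2 : ∀ y : Fin L → 𝒴, ∑ z : Fin L → 𝒵,
      (∏ k, pX k (x0 k)) * ∏ ℓ, (pY ℓ x0 (y ℓ) * pZ ℓ (y ℓ) (z ℓ) * χ ℓ (y ℓ) (z ℓ))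
      = (∏ k, pX k (x0 k)) * ∏ ℓ, ∑ zv, pY ℓ x0 (y ℓ) * pZ ℓ (y ℓ) zv * χ ℓ (y ℓ) zv := by
    intro y
    rw [← Finset.mul_sum, sum_pi_prod (fun ℓ zv => pY ℓ x0 (y ℓ) * pZ ℓ (y ℓ) zv * χ ℓ (y ℓ) zv)]
  rw [Finset.sum_congr rfl fun y _ => h2 y, ← Finset.mul_sum,
    sum_pi_prod (fun ℓ yv => ∑ zv, pY ℓ x0 yv * pZ ℓ yv zv * χ ℓ yv zv)]

lemma sum_fiber_x (Q : (Fin K → 𝒳) × (Fin L → 𝒴) × (Fin L → 𝒵) → Prop) [DecidablePred Q] :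
    ∑ ω ∈ univ.filter Q, p ω
      = ∑ x0 : Fin K → 𝒳, ∑ ω ∈ univ.filter (fun ω => ω.1 = x0 ∧ Q ω), p ω := by
  rw [← Finset.sum_fiberwise (univ.filter Q) (fun ω => ω.1) p]
  refine Finset.sum_congr rfl fun x0 _ => ?_
  refine Finset.sum_congr ?_ fun _ _ => rfl
  rw [Finset.filter_filter]
  exact Finset.filter_congr fun ω _ => by tauto

lemma ind_restrict {L : ℕ} {κ : Type*} [DecidableEq κ] (T : Finset (Fin L)) (v : Fin L → κ)
    (t : {ℓ // ℓ ∈ T} → κ) :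
    (if (fun i : {ℓ // ℓ ∈ T} => v i.1) = t then (1:ℝ) else 0)
      = ∏ ℓ, (if h : ℓ ∈ T then (if v ℓ = t ⟨ℓ, h⟩ then (1:ℝ) else 0) else 1) := by
  rw [← Finset.prod_subset (Finset.subset_univ T) (fun ℓ _ hℓ => dif_neg hℓ)]
  rw [← Finset.prod_attach T
    (fun ℓ => if h : ℓ ∈ T then (if v ℓ = t ⟨ℓ, h⟩ then (1:ℝ) else 0) else 1)]
  rw [Finset.prod_congr rfl (fun i _ => dif_pos i.2), Finset.prod_boole]
  by_cases h : (fun i : {ℓ // ℓ ∈ T} => v i.1) = t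
  · rw [if_pos h, if_pos (fun i _ => congrFun h i)]
  · rw [if_neg h, if_neg (fun hal => h (funext fun i => hal i (Finset.mem_attach _ _)))]

variable (hpY1 : ∀ ℓ x, ∑ y, pY ℓ x y = 1) (hpZ1 : ∀ ℓ y, ∑ z, pZ ℓ y z = 1)
  (hfac : ∀ x y z, p (x, y, z) =
      (∏ k, pX k (x k)) * (∏ ℓ, pY ℓ x (y ℓ)) * (∏ ℓ, pZ ℓ (y ℓ) (z ℓ)))

include hpY1 hpZ1 hfac

lemma fiber_X_only (x0 : Fin K → 𝒳) :
    ∑ ω ∈ univ.filter (fun ω => ω.1 = x0), p ω = ∏ k, pX k (x0 k) := by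
  have h := fiberX pX pY pZ p hfac x0 (fun _ _ _ => 1) (fun _ _ => True) (fun y z => by simp)
  have e : (univ.filter fun (ω : (Fin K → 𝒳) × (Fin L → 𝒴) × (Fin L → 𝒵)) =>
      ω.1 = x0 ∧ True) = univ.filter fun ω => ω.1 = x0 := by simp
  rw [← e, h]
  have hv : ∀ ℓ, (∑ yv, ∑ zv, pY ℓ x0 yv * pZ ℓ yv zv * 1) = 1 := by
    intro ℓ
    simp only [mul_one]
    exact eval_one _ _ (hpY1 ℓ x0) (fun yv => hpZ1 ℓ yv)
  rw [Finset.prod_congr rfl fun ℓ _ => hv ℓ, Finset.prod_const_one, mul_one]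

lemma fiber_X_Z (ℓ0 : Fin L) (x0 : Fin K → 𝒳) (z0 : 𝒵) :
    ∑ ω ∈ univ.filter (fun ω => ω.1 = x0 ∧ ω.2.2 ℓ0 = z0), p ω
      = (∑ ω ∈ univ.filter (fun ω => ω.1 = x0), p ω) * ∑ yv, pY ℓ0 x0 yv * pZ ℓ0 yv z0 := by
  rw [fiber_X_only pX pY pZ p hpY1 hpZ1 hfac x0]
  have h := fiberX pX pY pZ p hfac x0
      (fun ℓ _ zv => if ℓ = ℓ0 then (if zv = z0 then (1:ℝ) else 0) else 1)
      (fun _ z => z ℓ0 = z0)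
      (fun y z => by rw [Finset.prod_ite_eq' univ ℓ0 (fun ℓ => if z ℓ = z0 then (1:ℝ) else 0),
        if_pos (mem_univ _)])
  rw [h]
  congr 1
  rw [Finset.prod_eq_single ℓ0 ?h1 ?h2]
  case h1 =>
    intro ℓ _ hne
    have : ∀ yv zv, pY ℓ x0 yv * pZ ℓ yv zv *
        (if ℓ = ℓ0 then (if zv = z0 then (1:ℝ) else 0) else 1) = pY ℓ x0 yv * pZ ℓ yv zv := by
      intro yv zv; rw [if_neg hne, mul_one]
    rw [Finset.sum_congr rfl fun yv _ => Finset.sum_congr rfl fun zv _ => this yv zv]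
    exact eval_one _ _ (hpY1 ℓ x0) (fun yv => hpZ1 ℓ yv)
  case h2 => intro h; exact absurd (mem_univ ℓ0) h
  have : ∀ yv zv, pY ℓ0 x0 yv * pZ ℓ0 yv zv *
      (if ℓ0 = ℓ0 then (if zv = z0 then (1:ℝ) else 0) else 1)
      = pY ℓ0 x0 yv * pZ ℓ0 yv zv * (if zv = z0 then (1:ℝ) else 0) := by
    intro yv zv; rw [if_pos rfl]
  rw [Finset.sum_congr rfl fun yv _ => Finset.sum_congr rfl fun zv _ => this yv zv]
  exact eval_z _ _ z0

lemma fiber_X_Y (ℓ0 : Fin L) (x0 : Fin K → 𝒳) (y0 : 𝒴) :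
    ∑ ω ∈ univ.filter (fun ω => ω.1 = x0 ∧ ω.2.1 ℓ0 = y0), p ω
      = (∏ k, pX k (x0 k)) * pY ℓ0 x0 y0 := by
  have h := fiberX pX pY pZ p hfac x0
      (fun ℓ yv _ => if ℓ = ℓ0 then (if yv = y0 then (1:ℝ) else 0) else 1)
      (fun y _ => y ℓ0 = y0)
      (fun y z => by rw [Finset.prod_ite_eq' univ ℓ0 (fun ℓ => if y ℓ = y0 then (1:ℝ) else 0),
        if_pos (mem_univ _)])
  rw [h]
  congr 1
  rw [Finset.prod_eq_single ℓ0 ?h1 ?h2]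
  case h1 =>
    intro ℓ _ hne
    have : ∀ yv zv, pY ℓ x0 yv * pZ ℓ yv zv *
        (if ℓ = ℓ0 then (if yv = y0 then (1:ℝ) else 0) else 1) = pY ℓ x0 yv * pZ ℓ yv zv := by
      intro yv zv; rw [if_neg hne, mul_one]
    rw [Finset.sum_congr rfl fun yv _ => Finset.sum_congr rfl fun zv _ => this yv zv]
    exact eval_one _ _ (hpY1 ℓ x0) (fun yv => hpZ1 ℓ yv)
  case h2 => intro h; exact absurd (mem_univ ℓ0) h
  have : ∀ yv zv, pY ℓ0 x0 yv * pZ ℓ0 yv zv *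
      (if ℓ0 = ℓ0 then (if yv = y0 then (1:ℝ) else 0) else 1)
      = pY ℓ0 x0 yv * pZ ℓ0 yv zv * (if yv = y0 then (1:ℝ) else 0) := by
    intro yv zv; rw [if_pos rfl]
  rw [Finset.sum_congr rfl fun yv _ => Finset.sum_congr rfl fun zv _ => this yv zv]
  exact eval_y _ _ y0 (fun yv => hpZ1 ℓ0 yv)

lemma fiber_X_YZ (ℓ0 : Fin L) (x0 : Fin K → 𝒳) (y0 : 𝒴) (z0 : 𝒵) :
    ∑ ω ∈ univ.filter (fun ω => ω.1 = x0 ∧ (ω.2.1 ℓ0 = y0 ∧ ω.2.2 ℓ0 = z0)), p ω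
      = (∏ k, pX k (x0 k)) * (pY ℓ0 x0 y0 * pZ ℓ0 y0 z0) := by
  have h := fiberX pX pY pZ p hfac x0
      (fun ℓ yv zv => if ℓ = ℓ0 then
          ((if yv = y0 then (1:ℝ) else 0) * (if zv = z0 then (1:ℝ) else 0)) else 1)
      (fun y z => y ℓ0 = y0 ∧ z ℓ0 = z0)
      (fun y z => by
        rw [Finset.prod_ite_eq' univ ℓ0
          (fun ℓ => (if y ℓ = y0 then (1:ℝ) else 0) * (if z ℓ = z0 then (1:ℝ) else 0)),
          if_pos (mem_univ _)]
        rcases em (y ℓ0 = y0) with h1 | h1 <;> rcases em (z ℓ0 = z0) with h2 | h2 <;>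
          simp [h1, h2])
  rw [h]
  congr 1
  rw [Finset.prod_eq_single ℓ0 ?h1 ?h2]
  case h1 =>
    intro ℓ _ hne
    have : ∀ yv zv, pY ℓ x0 yv * pZ ℓ yv zv *
        (if ℓ = ℓ0 then ((if yv = y0 then (1:ℝ) else 0) * (if zv = z0 then (1:ℝ) else 0)) else 1)
        = pY ℓ x0 yv * pZ ℓ yv zv := by
      intro yv zv; rw [if_neg hne, mul_one]
    rw [Finset.sum_congr rfl fun yv _ => Finset.sum_congr rfl fun zv _ => this yv zv]
    exact eval_one _ _ (hpY1 ℓ x0) (fun yv => hpZ1 ℓ yv)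
  case h2 => intro h; exact absurd (mem_univ ℓ0) h
  have : ∀ yv zv, pY ℓ0 x0 yv * pZ ℓ0 yv zv *
      (if ℓ0 = ℓ0 then ((if yv = y0 then (1:ℝ) else 0) * (if zv = z0 then (1:ℝ) else 0)) else 1)
      = pY ℓ0 x0 yv * pZ ℓ0 yv zv *
        ((if yv = y0 then (1:ℝ) else 0) * (if zv = z0 then (1:ℝ) else 0)) := by
    intro yv zv; rw [if_pos rfl]
  rw [Finset.sum_congr rfl fun yv _ => Finset.sum_congr rfl fun zv _ => this yv zv]
  exact eval_yz _ _ y0 z0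

lemma fiber_x_AC (S : Finset (Fin L)) (a : {ℓ // ℓ ∈ S} → 𝒴) (c : {ℓ // ℓ ∈ Sᶜ} → 𝒵)
    (x0 : Fin K → 𝒳) :
    ∑ ω ∈ univ.filter (fun ω => ω.1 = x0 ∧
        ((fun i : {ℓ // ℓ ∈ S} => ω.2.1 i.1) = a ∧ (fun i : {ℓ // ℓ ∈ Sᶜ} => ω.2.2 i.1) = c)),
        p ω
      = (∏ k, pX k (x0 k)) *
        ((∏ i ∈ S.attach, pY i.1 x0 (a i)) *
          ∏ i ∈ Sᶜ.attach, ∑ yv, pY i.1 x0 yv * pZ i.1 yv (c i)) := by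
  classical
  set χ : Fin L → 𝒴 → 𝒵 → ℝ := fun ℓ yv zv =>
    (if h : ℓ ∈ S then (if yv = a ⟨ℓ, h⟩ then (1:ℝ) else 0) else 1) *
    (if h : ℓ ∈ Sᶜ then (if zv = c ⟨ℓ, h⟩ then (1:ℝ) else 0) else 1) with hχ
  have hQ : ∀ (y : Fin L → 𝒴) (z : Fin L → 𝒵),
      (if (fun i : {ℓ // ℓ ∈ S} => y i.1) = a ∧ (fun i : {ℓ // ℓ ∈ Sᶜ} => z i.1) = c
        then (1:ℝ) else 0)
      = ∏ ℓ, χ ℓ (y ℓ) (z ℓ) := by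
    intro y z
    rw [hχ]
    simp only
    rw [Finset.prod_mul_distrib, ← ind_restrict S y a, ← ind_restrict Sᶜ z c]
    by_cases h1 : (fun i : {ℓ // ℓ ∈ S} => y i.1) = a <;>
      by_cases h2 : (fun i : {ℓ // ℓ ∈ Sᶜ} => z i.1) = c <;> simp [h1, h2]
  rw [fiberX pX pY pZ p hfac x0 χ _ hQ]
  congr 1
  rw [← Finset.prod_mul_prod_compl S
    (fun ℓ => ∑ yv, ∑ zv, pY ℓ x0 yv * pZ ℓ yv zv * χ ℓ yv zv)]
  congr 1
  · rw [← Finset.prod_attach S (fun ℓ => ∑ yv, ∑ zv, pY ℓ x0 yv * pZ ℓ yv zv * χ ℓ yv zv)]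
    refine Finset.prod_congr rfl fun i _ => ?_
    have hv : ∀ yv zv, pY i.1 x0 yv * pZ i.1 yv zv * χ i.1 yv zv
        = pY i.1 x0 yv * pZ i.1 yv zv * (if yv = a i then (1:ℝ) else 0) := by
      intro yv zv
      rw [hχ]
      simp only
      rw [dif_pos i.2, dif_neg (fun h => Finset.mem_compl.1 h i.2)]
      ring
    rw [Finset.sum_congr rfl fun yv _ => Finset.sum_congr rfl fun zv _ => hv yv zv]
    exact eval_y _ _ (a i) (fun yv => hpZ1 i.1 yv)
  · rw [← Finset.prod_attach Sᶜ (fun ℓ => ∑ yv, ∑ zv, pY ℓ x0 yv * pZ ℓ yv zv * χ ℓ yv zv)]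
    refine Finset.prod_congr rfl fun i _ => ?_
    have hv : ∀ yv zv, pY i.1 x0 yv * pZ i.1 yv zv * χ i.1 yv zv
        = pY i.1 x0 yv * pZ i.1 yv zv * (if zv = c i then (1:ℝ) else 0) := by
      intro yv zv
      rw [hχ]
      simp only
      rw [dif_neg (Finset.mem_compl.1 i.2), dif_pos i.2]
      ring
    rw [Finset.sum_congr rfl fun yv _ => Finset.sum_congr rfl fun zv _ => hv yv zv]
    exact eval_z _ _ (c i)

lemma fiber_x_ACB (S : Finset (Fin L)) (a : {ℓ // ℓ ∈ S} → 𝒴) (c : {ℓ // ℓ ∈ Sᶜ} → 𝒵)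
    (b : {ℓ // ℓ ∈ S} → 𝒵) (x0 : Fin K → 𝒳) :
    ∑ ω ∈ univ.filter (fun ω => ω.1 = x0 ∧
        (((fun i : {ℓ // ℓ ∈ S} => ω.2.1 i.1) = a ∧ (fun i : {ℓ // ℓ ∈ Sᶜ} => ω.2.2 i.1) = c) ∧
          (fun i : {ℓ // ℓ ∈ S} => ω.2.2 i.1) = b)), p ω
      = (∏ k, pX k (x0 k)) *
        ((∏ i ∈ S.attach, pY i.1 x0 (a i) * pZ i.1 (a i) (b i)) *
          ∏ i ∈ Sᶜ.attach, ∑ yv, pY i.1 x0 yv * pZ i.1 yv (c i)) := by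
  classical
  set χ : Fin L → 𝒴 → 𝒵 → ℝ := fun ℓ yv zv =>
    ((if h : ℓ ∈ S then (if yv = a ⟨ℓ, h⟩ then (1:ℝ) else 0) else 1) *
     (if h : ℓ ∈ Sᶜ then (if zv = c ⟨ℓ, h⟩ then (1:ℝ) else 0) else 1)) *
    (if h : ℓ ∈ S then (if zv = b ⟨ℓ, h⟩ then (1:ℝ) else 0) else 1) with hχ
  have hQ : ∀ (y : Fin L → 𝒴) (z : Fin L → 𝒵),
      (if ((fun i : {ℓ // ℓ ∈ S} => y i.1) = a ∧ (fun i : {ℓ // ℓ ∈ Sᶜ} => z i.1) = c) ∧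
          (fun i : {ℓ // ℓ ∈ S} => z i.1) = b then (1:ℝ) else 0)
      = ∏ ℓ, χ ℓ (y ℓ) (z ℓ) := by
    intro y z
    rw [hχ]
    simp only
    rw [Finset.prod_mul_distrib, Finset.prod_mul_distrib,
      ← ind_restrict S y a, ← ind_restrict Sᶜ z c, ← ind_restrict S z b]
    by_cases h1 : (fun i : {ℓ // ℓ ∈ S} => y i.1) = a <;>
      by_cases h2 : (fun i : {ℓ // ℓ ∈ Sᶜ} => z i.1) = c <;>
      by_cases h3 : (fun i : {ℓ // ℓ ∈ S} => z i.1) = b <;> simp [h1, h2, h3]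
  rw [fiberX pX pY pZ p hfac x0 χ _ hQ]
  congr 1
  rw [← Finset.prod_mul_prod_compl S
    (fun ℓ => ∑ yv, ∑ zv, pY ℓ x0 yv * pZ ℓ yv zv * χ ℓ yv zv)]
  congr 1
  · rw [← Finset.prod_attach S (fun ℓ => ∑ yv, ∑ zv, pY ℓ x0 yv * pZ ℓ yv zv * χ ℓ yv zv)]
    refine Finset.prod_congr rfl fun i _ => ?_
    have hv : ∀ yv zv, pY i.1 x0 yv * pZ i.1 yv zv * χ i.1 yv zv
        = pY i.1 x0 yv * pZ i.1 yv zv *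
          ((if yv = a i then (1:ℝ) else 0) * (if zv = b i then (1:ℝ) else 0)) := by
      intro yv zv
      rw [hχ]
      simp only
      rw [dif_pos i.2, dif_neg (fun h => Finset.mem_compl.1 h i.2), dif_pos i.2]
      ring
    rw [Finset.sum_congr rfl fun yv _ => Finset.sum_congr rfl fun zv _ => hv yv zv]
    exact eval_yz _ _ (a i) (b i)
  · rw [← Finset.prod_attach Sᶜ (fun ℓ => ∑ yv, ∑ zv, pY ℓ x0 yv * pZ ℓ yv zv * χ ℓ yv zv)]
    refine Finset.prod_congr rfl fun i _ => ?_
    have hv : ∀ yv zv, pY i.1 x0 yv * pZ i.1 yv zv * χ i.1 yv zv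
        = pY i.1 x0 yv * pZ i.1 yv zv * (if zv = c i then (1:ℝ) else 0) := by
      intro yv zv
      rw [hχ]
      simp only
      rw [dif_neg (Finset.mem_compl.1 i.2), dif_pos i.2, dif_neg (Finset.mem_compl.1 i.2)]
      ring
    rw [Finset.sum_congr rfl fun yv _ => Finset.sum_congr rfl fun zv _ => hv yv zv]
    exact eval_z _ _ (c i)

lemma fiber_x_C (S : Finset (Fin L)) (c : {ℓ // ℓ ∈ Sᶜ} → 𝒵) (x0 : Fin K → 𝒳) :
    ∑ ω ∈ univ.filter (fun ω => ω.1 = x0 ∧ (fun i : {ℓ // ℓ ∈ Sᶜ} => ω.2.2 i.1) = c), p ω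
      = (∏ k, pX k (x0 k)) *
          ∏ i ∈ Sᶜ.attach, ∑ yv, pY i.1 x0 yv * pZ i.1 yv (c i) := by
  classical
  set χ : Fin L → 𝒴 → 𝒵 → ℝ := fun ℓ _ zv =>
    (if h : ℓ ∈ Sᶜ then (if zv = c ⟨ℓ, h⟩ then (1:ℝ) else 0) else 1) with hχ
  have hQ : ∀ (y : Fin L → 𝒴) (z : Fin L → 𝒵),
      (if (fun i : {ℓ // ℓ ∈ Sᶜ} => z i.1) = c then (1:ℝ) else 0)
      = ∏ ℓ, χ ℓ (y ℓ) (z ℓ) := by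
    intro y z
    rw [hχ]
    exact ind_restrict Sᶜ z c
  rw [fiberX pX pY pZ p hfac x0 χ _ hQ]
  congr 1
  rw [← Finset.prod_mul_prod_compl S
    (fun ℓ => ∑ yv, ∑ zv, pY ℓ x0 yv * pZ ℓ yv zv * χ ℓ yv zv)]
  have hSpart : (∏ ℓ ∈ S, ∑ yv, ∑ zv, pY ℓ x0 yv * pZ ℓ yv zv * χ ℓ yv zv) = 1 := by
    refine Finset.prod_eq_one fun ℓ hℓ => ?_
    have hv : ∀ yv zv, pY ℓ x0 yv * pZ ℓ yv zv * χ ℓ yv zv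
        = pY ℓ x0 yv * pZ ℓ yv zv := by
      intro yv zv
      rw [hχ]
      simp only
      rw [dif_neg (fun h => Finset.mem_compl.1 h hℓ), mul_one]
    rw [Finset.sum_congr rfl fun yv _ => Finset.sum_congr rfl fun zv _ => hv yv zv]
    exact eval_one _ _ (hpY1 ℓ x0) (fun yv => hpZ1 ℓ yv)
  rw [hSpart, one_mul]
  rw [← Finset.prod_attach Sᶜ (fun ℓ => ∑ yv, ∑ zv, pY ℓ x0 yv * pZ ℓ yv zv * χ ℓ yv zv)]
  refine Finset.prod_congr rfl fun i _ => ?_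
  have hv : ∀ yv zv, pY i.1 x0 yv * pZ i.1 yv zv * χ i.1 yv zv
      = pY i.1 x0 yv * pZ i.1 yv zv * (if zv = c i then (1:ℝ) else 0) := by
    intro yv zv
    rw [hχ]
    simp only
    rw [dif_pos i.2]
  rw [Finset.sum_congr rfl fun yv _ => Finset.sum_congr rfl fun zv _ => hv yv zv]
  exact eval_z _ _ (c i)

lemma fiber_x_CB (S : Finset (Fin L)) (c : {ℓ // ℓ ∈ Sᶜ} → 𝒵) (b : {ℓ // ℓ ∈ S} → 𝒵)
    (x0 : Fin K → 𝒳) :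
    ∑ ω ∈ univ.filter (fun ω => ω.1 = x0 ∧
        ((fun i : {ℓ // ℓ ∈ Sᶜ} => ω.2.2 i.1) = c ∧ (fun i : {ℓ // ℓ ∈ S} => ω.2.2 i.1) = b)),
        p ω
      = (∏ k, pX k (x0 k)) *
        ((∏ i ∈ S.attach, ∑ yv, pY i.1 x0 yv * pZ i.1 yv (b i)) *
          ∏ i ∈ Sᶜ.attach, ∑ yv, pY i.1 x0 yv * pZ i.1 yv (c i)) := by
  classical
  set χ : Fin L → 𝒴 → 𝒵 → ℝ := fun ℓ _ zv =>
    (if h : ℓ ∈ Sᶜ then (if zv = c ⟨ℓ, h⟩ then (1:ℝ) else 0) else 1) *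
    (if h : ℓ ∈ S then (if zv = b ⟨ℓ, h⟩ then (1:ℝ) else 0) else 1) with hχ
  have hQ : ∀ (y : Fin L → 𝒴) (z : Fin L → 𝒵),
      (if (fun i : {ℓ // ℓ ∈ Sᶜ} => z i.1) = c ∧ (fun i : {ℓ // ℓ ∈ S} => z i.1) = b
        then (1:ℝ) else 0)
      = ∏ ℓ, χ ℓ (y ℓ) (z ℓ) := by
    intro y z
    rw [hχ]
    simp only
    rw [Finset.prod_mul_distrib, ← ind_restrict Sᶜ z c, ← ind_restrict S z b]
    by_cases h1 : (fun i : {ℓ // ℓ ∈ Sᶜ} => z i.1) = c <;>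
      by_cases h2 : (fun i : {ℓ // ℓ ∈ S} => z i.1) = b <;> simp [h1, h2]
  rw [fiberX pX pY pZ p hfac x0 χ _ hQ]
  congr 1
  rw [← Finset.prod_mul_prod_compl S
    (fun ℓ => ∑ yv, ∑ zv, pY ℓ x0 yv * pZ ℓ yv zv * χ ℓ yv zv)]
  congr 1
  · rw [← Finset.prod_attach S (fun ℓ => ∑ yv, ∑ zv, pY ℓ x0 yv * pZ ℓ yv zv * χ ℓ yv zv)]
    refine Finset.prod_congr rfl fun i _ => ?_
    have hv : ∀ yv zv, pY i.1 x0 yv * pZ i.1 yv zv * χ i.1 yv zv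
        = pY i.1 x0 yv * pZ i.1 yv zv * (if zv = b i then (1:ℝ) else 0) := by
      intro yv zv
      rw [hχ]
      simp only
      rw [dif_neg (fun h => Finset.mem_compl.1 h i.2), dif_pos i.2]
      ring
    rw [Finset.sum_congr rfl fun yv _ => Finset.sum_congr rfl fun zv _ => hv yv zv]
    exact eval_z _ _ (b i)
  · rw [← Finset.prod_attach Sᶜ (fun ℓ => ∑ yv, ∑ zv, pY ℓ x0 yv * pZ ℓ yv zv * χ ℓ yv zv)]
    refine Finset.prod_congr rfl fun i _ => ?_
    have hv : ∀ yv zv, pY i.1 x0 yv * pZ i.1 yv zv * χ i.1 yv zv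
        = pY i.1 x0 yv * pZ i.1 yv zv * (if zv = c i then (1:ℝ) else 0) := by
      intro yv zv
      rw [hχ]
      simp only
      rw [dif_pos i.2, dif_neg (Finset.mem_compl.1 i.2)]
      ring
    rw [Finset.sum_congr rfl fun yv _ => Finset.sum_congr rfl fun zv _ => hv yv zv]
    exact eval_z _ _ (c i)

lemma coreH3 (ℓ0 : Fin L) (u : Fin K → 𝒳) (w : 𝒵) :
    ∑ ω ∈ univ.filter (fun ω => ω.1 = u ∧ ω.2.2 ℓ0 = w), p ω
      = (∑ ω ∈ univ.filter (fun ω => ω.1 = u), p ω) * ∑ yv, pY ℓ0 u yv * pZ ℓ0 yv w :=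
  fiber_X_Z pX pY pZ p hpY1 hpZ1 hfac ℓ0 u w

lemma coreH4 (ℓ0 : Fin L) (u : (Fin K → 𝒳) × 𝒴) (w : 𝒵) :
    ∑ ω ∈ univ.filter (fun ω => (ω.1, ω.2.1 ℓ0) = u ∧ ω.2.2 ℓ0 = w), p ω
      = (∑ ω ∈ univ.filter (fun ω => (ω.1, ω.2.1 ℓ0) = u), p ω) * pZ ℓ0 u.2 w := by
  obtain ⟨x0, y0⟩ := u
  have e1 : (univ.filter (fun ω : (Fin K → 𝒳) × (Fin L → 𝒴) × (Fin L → 𝒵) =>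
      (ω.1, ω.2.1 ℓ0) = (x0, y0) ∧ ω.2.2 ℓ0 = w))
      = univ.filter (fun ω => ω.1 = x0 ∧ (ω.2.1 ℓ0 = y0 ∧ ω.2.2 ℓ0 = w)) :=
    Finset.filter_congr fun ω _ => by simp [Prod.ext_iff, and_assoc]
  have e2 : (univ.filter (fun ω : (Fin K → 𝒳) × (Fin L → 𝒴) × (Fin L → 𝒵) =>
      (ω.1, ω.2.1 ℓ0) = (x0, y0)))
      = univ.filter (fun ω => ω.1 = x0 ∧ ω.2.1 ℓ0 = y0) :=
    Finset.filter_congr fun ω _ => by simp [Prod.ext_iff]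
  rw [e1, e2, fiber_X_YZ pX pY pZ p hpY1 hpZ1 hfac ℓ0 x0 y0 w,
    fiber_X_Y pX pY pZ p hpY1 hpZ1 hfac ℓ0 x0 y0]
  ring

lemma coreH1 (S : Finset (Fin L)) (u : ({ℓ // ℓ ∈ S} → 𝒴) × ({ℓ // ℓ ∈ Sᶜ} → 𝒵))
    (w : {ℓ // ℓ ∈ S} → 𝒵) :
    ∑ ω ∈ univ.filter (fun ω =>
        ((fun i : {ℓ // ℓ ∈ S} => ω.2.1 i.1), (fun i : {ℓ // ℓ ∈ Sᶜ} => ω.2.2 i.1)) = u ∧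
        (fun i : {ℓ // ℓ ∈ S} => ω.2.2 i.1) = w), p ω
      = (∑ ω ∈ univ.filter (fun ω =>
          ((fun i : {ℓ // ℓ ∈ S} => ω.2.1 i.1), (fun i : {ℓ // ℓ ∈ Sᶜ} => ω.2.2 i.1)) = u), p ω)
        * ∏ i : {ℓ // ℓ ∈ S}, pZ i.1 (u.1 i) (w i) := by
  classical
  obtain ⟨a, c⟩ := u
  have e1 : (univ.filter (fun ω : (Fin K → 𝒳) × (Fin L → 𝒴) × (Fin L → 𝒵) =>
      ((fun i : {ℓ // ℓ ∈ S} => ω.2.1 i.1), (fun i : {ℓ // ℓ ∈ Sᶜ} => ω.2.2 i.1)) = (a, c) ∧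
        (fun i : {ℓ // ℓ ∈ S} => ω.2.2 i.1) = w))
      = univ.filter (fun ω =>
        (((fun i : {ℓ // ℓ ∈ S} => ω.2.1 i.1) = a ∧ (fun i : {ℓ // ℓ ∈ Sᶜ} => ω.2.2 i.1) = c) ∧
          (fun i : {ℓ // ℓ ∈ S} => ω.2.2 i.1) = w)) :=
    Finset.filter_congr fun ω _ => by simp [Prod.ext_iff]
  have e2 : (univ.filter (fun ω : (Fin K → 𝒳) × (Fin L → 𝒴) × (Fin L → 𝒵) =>
      ((fun i : {ℓ // ℓ ∈ S} => ω.2.1 i.1), (fun i : {ℓ // ℓ ∈ Sᶜ} => ω.2.2 i.1)) = (a, c)))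
      = univ.filter (fun ω =>
        ((fun i : {ℓ // ℓ ∈ S} => ω.2.1 i.1) = a ∧ (fun i : {ℓ // ℓ ∈ Sᶜ} => ω.2.2 i.1) = c)) :=
    Finset.filter_congr fun ω _ => by simp [Prod.ext_iff]
  rw [e1, e2, sum_fiber_x p _, sum_fiber_x p _]
  rw [Finset.sum_congr rfl fun x0 _ => fiber_x_ACB pX pY pZ p hpY1 hpZ1 hfac S a c w x0,
    Finset.sum_congr rfl fun x0 _ => fiber_x_AC pX pY pZ p hpY1 hpZ1 hfac S a c x0]
  rw [Finset.sum_mul]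
  refine Finset.sum_congr rfl fun x0 _ => ?_
  rw [Finset.prod_mul_distrib, Finset.univ_eq_attach]
  ring

lemma coreH2 (S : Finset (Fin L)) (u : (Fin K → 𝒳) × ({ℓ // ℓ ∈ Sᶜ} → 𝒵))
    (w : {ℓ // ℓ ∈ S} → 𝒵) :
    ∑ ω ∈ univ.filter (fun ω =>
        (ω.1, (fun i : {ℓ // ℓ ∈ Sᶜ} => ω.2.2 i.1)) = u ∧
        (fun i : {ℓ // ℓ ∈ S} => ω.2.2 i.1) = w), p ω
      = (∑ ω ∈ univ.filter (fun ω =>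
          (ω.1, (fun i : {ℓ // ℓ ∈ Sᶜ} => ω.2.2 i.1)) = u), p ω)
        * ∏ i : {ℓ // ℓ ∈ S}, ∑ yv, pY i.1 u.1 yv * pZ i.1 yv (w i) := by
  classical
  obtain ⟨x0, c⟩ := u
  have e1 : (univ.filter (fun ω : (Fin K → 𝒳) × (Fin L → 𝒴) × (Fin L → 𝒵) =>
      (ω.1, (fun i : {ℓ // ℓ ∈ Sᶜ} => ω.2.2 i.1)) = (x0, c) ∧
        (fun i : {ℓ // ℓ ∈ S} => ω.2.2 i.1) = w))
      = univ.filter (fun ω => ω.1 = x0 ∧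
        ((fun i : {ℓ // ℓ ∈ Sᶜ} => ω.2.2 i.1) = c ∧ (fun i : {ℓ // ℓ ∈ S} => ω.2.2 i.1) = w)) :=
    Finset.filter_congr fun ω _ => by simp [Prod.ext_iff, and_assoc]
  have e2 : (univ.filter (fun ω : (Fin K → 𝒳) × (Fin L → 𝒴) × (Fin L → 𝒵) =>
      (ω.1, (fun i : {ℓ // ℓ ∈ Sᶜ} => ω.2.2 i.1)) = (x0, c)))
      = univ.filter (fun ω => ω.1 = x0 ∧ (fun i : {ℓ // ℓ ∈ Sᶜ} => ω.2.2 i.1) = c) :=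
    Finset.filter_congr fun ω _ => by simp [Prod.ext_iff]
  rw [e1, e2, fiber_x_CB pX pY pZ p hpY1 hpZ1 hfac S c w x0,
    fiber_x_C pX pY pZ p hpY1 hpZ1 hfac S c x0]
  rw [Finset.univ_eq_attach]
  ring

end CRAN

/-- under the C-RAN factorization,
I(Y_S; Ŷ_S | Ŷ_{Sᶜ}) = I(X_K; Ŷ_L) − I(X_K; Ŷ_{Sᶜ}) + ∑_{ℓ∈S} I(Y_ℓ; Ŷ_ℓ | X_K). -/
theorem condMI_decomposition {K L : ℕ} {𝒳 𝒴 𝒵 : Type*}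
    [Fintype 𝒳] [Fintype 𝒴] [Fintype 𝒵] [DecidableEq 𝒳] [DecidableEq 𝒴] [DecidableEq 𝒵]
    (pX : Fin K → 𝒳 → ℝ) (pY : Fin L → (Fin K → 𝒳) → 𝒴 → ℝ) (pZ : Fin L → 𝒴 → 𝒵 → ℝ)
    (hpX0 : ∀ k x, 0 ≤ pX k x) (hpX1 : ∀ k, ∑ x, pX k x = 1)
    (hpY0 : ∀ ℓ x y, 0 ≤ pY ℓ x y) (hpY1 : ∀ ℓ x, ∑ y, pY ℓ x y = 1)
    (hpZ0 : ∀ ℓ y z, 0 ≤ pZ ℓ y z) (hpZ1 : ∀ ℓ y, ∑ z, pZ ℓ y z = 1)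
    (p : (Fin K → 𝒳) × (Fin L → 𝒴) × (Fin L → 𝒵) → ℝ)
    (hfac : ∀ x y z, p (x, y, z) =
      (∏ k, pX k (x k)) * (∏ ℓ, pY ℓ x (y ℓ)) * (∏ ℓ, pZ ℓ (y ℓ) (z ℓ)))
    (S : Finset (Fin L)) :
    condMI p (fun ω (ℓ : {ℓ // ℓ ∈ S}) => ω.2.1 ℓ.1)
        (fun ω (ℓ : {ℓ // ℓ ∈ S}) => ω.2.2 ℓ.1)
        (fun ω (ℓ : {ℓ // ℓ ∈ Sᶜ}) => ω.2.2 ℓ.1)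
      = mi p (fun ω => ω.1) (fun ω => ω.2.2)
        - mi p (fun ω => ω.1) (fun ω (ℓ : {ℓ // ℓ ∈ Sᶜ}) => ω.2.2 ℓ.1)
        + ∑ ℓ ∈ S, condMI p (fun ω => ω.2.1 ℓ) (fun ω => ω.2.2 ℓ) (fun ω => ω.1) := by
  classical
  -- abbreviations for sample space
  -- E1 : LHS in terms of ent and corr1
  have hE1 : condMI p (fun ω (ℓ : {ℓ // ℓ ∈ S}) => ω.2.1 ℓ.1)
        (fun ω (ℓ : {ℓ // ℓ ∈ S}) => ω.2.2 ℓ.1)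
        (fun ω (ℓ : {ℓ // ℓ ∈ Sᶜ}) => ω.2.2 ℓ.1)
      = ent p (fun ω => ω.2.2)
        - ent p (fun ω => (fun i : {ℓ // ℓ ∈ Sᶜ} => ω.2.2 i.1))
        + ∑ ω, p ω * ∑ i : {ℓ // ℓ ∈ S},
            ∑ zv, pZ i.1 (ω.2.1 i.1) zv * Real.log (pZ i.1 (ω.2.1 i.1) zv) := by
    have hR1 : ent p (fun ω : (Fin K → 𝒳) × (Fin L → 𝒴) × (Fin L → 𝒵) =>
        ((fun i : {ℓ // ℓ ∈ S} => ω.2.2 i.1), (fun i : {ℓ // ℓ ∈ Sᶜ} => ω.2.2 i.1)))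
        = ent p (fun ω => ω.2.2) := by
      refine ent_comp_inj p (fun ω => ω.2.2)
        (fun z => ((fun i : {ℓ // ℓ ∈ S} => z i.1), (fun i : {ℓ // ℓ ∈ Sᶜ} => z i.1))) ?_
      intro z z' h
      funext ℓ
      by_cases hℓ : ℓ ∈ S
      · exact congrFun (congrArg Prod.fst h) ⟨ℓ, hℓ⟩
      · exact congrFun (congrArg Prod.snd h) ⟨ℓ, Finset.mem_compl.2 hℓ⟩
    have hR2 : ent p (fun ω : (Fin K → 𝒳) × (Fin L → 𝒴) × (Fin L → 𝒵) =>
        ((fun i : {ℓ // ℓ ∈ S} => ω.2.1 i.1), (fun i : {ℓ // ℓ ∈ S} => ω.2.2 i.1),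
          (fun i : {ℓ // ℓ ∈ Sᶜ} => ω.2.2 i.1)))
        = ent p (fun ω : (Fin K → 𝒳) × (Fin L → 𝒴) × (Fin L → 𝒵) =>
          (((fun i : {ℓ // ℓ ∈ S} => ω.2.1 i.1), (fun i : {ℓ // ℓ ∈ Sᶜ} => ω.2.2 i.1)),
            (fun i : {ℓ // ℓ ∈ S} => ω.2.2 i.1))) := by
      refine ent_comp_inj p (fun ω : (Fin K → 𝒳) × (Fin L → 𝒴) × (Fin L → 𝒵) =>
          (((fun i : {ℓ // ℓ ∈ S} => ω.2.1 i.1), (fun i : {ℓ // ℓ ∈ Sᶜ} => ω.2.2 i.1)),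
            (fun i : {ℓ // ℓ ∈ S} => ω.2.2 i.1)))
        (fun t => (t.1.1, t.2, t.1.2)) ?_
      intro t t' h
      obtain ⟨⟨a, c⟩, b⟩ := t
      obtain ⟨⟨a', c'⟩, b'⟩ := t'
      simp only [Prod.mk.injEq] at h ⊢
      tauto
    have hC1 : ent p (fun ω : (Fin K → 𝒳) × (Fin L → 𝒴) × (Fin L → 𝒵) =>
        (((fun i : {ℓ // ℓ ∈ S} => ω.2.1 i.1), (fun i : {ℓ // ℓ ∈ Sᶜ} => ω.2.2 i.1)),
          (fun i : {ℓ // ℓ ∈ S} => ω.2.2 i.1)))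
        = ent p (fun ω : (Fin K → 𝒳) × (Fin L → 𝒴) × (Fin L → 𝒵) =>
            ((fun i : {ℓ // ℓ ∈ S} => ω.2.1 i.1), (fun i : {ℓ // ℓ ∈ Sᶜ} => ω.2.2 i.1)))
          - ∑ u : ({ℓ // ℓ ∈ S} → 𝒴) × ({ℓ // ℓ ∈ Sᶜ} → 𝒵),
              (∑ ω ∈ univ.filter (fun ω : (Fin K → 𝒳) × (Fin L → 𝒴) × (Fin L → 𝒵) =>
                ((fun i : {ℓ // ℓ ∈ S} => ω.2.1 i.1), (fun i : {ℓ // ℓ ∈ Sᶜ} => ω.2.2 i.1)) = u),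
                p ω) *
              ∑ w : {ℓ // ℓ ∈ S} → 𝒵,
                (∏ i : {ℓ // ℓ ∈ S}, pZ i.1 (u.1 i) (w i)) *
                  Real.log (∏ i : {ℓ // ℓ ∈ S}, pZ i.1 (u.1 i) (w i)) :=
      core p (fun ω => ((fun i : {ℓ // ℓ ∈ S} => ω.2.1 i.1),
          (fun i : {ℓ // ℓ ∈ Sᶜ} => ω.2.2 i.1)))
        (fun ω => (fun i : {ℓ // ℓ ∈ S} => ω.2.2 i.1))
        (fun u w => ∏ i : {ℓ // ℓ ∈ S}, pZ i.1 (u.1 i) (w i))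
        (coreH1 pX pY pZ p hpY1 hpZ1 hfac S)
    have hcorr1 : (∑ u : ({ℓ // ℓ ∈ S} → 𝒴) × ({ℓ // ℓ ∈ Sᶜ} → 𝒵),
          (∑ ω ∈ univ.filter (fun ω : (Fin K → 𝒳) × (Fin L → 𝒴) × (Fin L → 𝒵) =>
            ((fun i : {ℓ // ℓ ∈ S} => ω.2.1 i.1), (fun i : {ℓ // ℓ ∈ Sᶜ} => ω.2.2 i.1)) = u),
            p ω) *
          ∑ w : {ℓ // ℓ ∈ S} → 𝒵,
            (∏ i : {ℓ // ℓ ∈ S}, pZ i.1 (u.1 i) (w i)) *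
              Real.log (∏ i : {ℓ // ℓ ∈ S}, pZ i.1 (u.1 i) (w i)))
        = ∑ ω, p ω * ∑ i : {ℓ // ℓ ∈ S},
            ∑ zv, pZ i.1 (ω.2.1 i.1) zv * Real.log (pZ i.1 (ω.2.1 i.1) zv) := by
      have h1 : ∀ u : ({ℓ // ℓ ∈ S} → 𝒴) × ({ℓ // ℓ ∈ Sᶜ} → 𝒵),
          (∑ w : {ℓ // ℓ ∈ S} → 𝒵,
            (∏ i : {ℓ // ℓ ∈ S}, pZ i.1 (u.1 i) (w i)) *
              Real.log (∏ i : {ℓ // ℓ ∈ S}, pZ i.1 (u.1 i) (w i)))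
          = ∑ i : {ℓ // ℓ ∈ S}, ∑ zv, pZ i.1 (u.1 i) zv * Real.log (pZ i.1 (u.1 i) zv) :=
        fun u => hprod (fun i zv => pZ i.1 (u.1 i) zv) (fun i => hpZ1 i.1 (u.1 i))
      rw [Finset.sum_congr rfl fun u _ => by rw [h1 u]]
      exact sum_fiber p
        (fun ω => ((fun i : {ℓ // ℓ ∈ S} => ω.2.1 i.1), (fun i : {ℓ // ℓ ∈ Sᶜ} => ω.2.2 i.1)))
        (fun u => ∑ i : {ℓ // ℓ ∈ S}, ∑ zv, pZ i.1 (u.1 i) zv * Real.log (pZ i.1 (u.1 i) zv))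
    simp only [condMI]
    rw [hR1, hR2, hC1, hcorr1]
    ring
  -- E2 : mi X Zf
  have hE2 : mi p (fun ω => ω.1) (fun ω => ω.2.2)
      = ent p (fun ω => ω.1) + ent p (fun ω => ω.2.2)
        - (ent p (fun ω : (Fin K → 𝒳) × (Fin L → 𝒴) × (Fin L → 𝒵) =>
            (ω.1, (fun i : {ℓ // ℓ ∈ Sᶜ} => ω.2.2 i.1)))
          - ∑ ω, p ω * ∑ i : {ℓ // ℓ ∈ S},
              ∑ zv, (∑ yv, pY i.1 ω.1 yv * pZ i.1 yv zv) *
                Real.log (∑ yv, pY i.1 ω.1 yv * pZ i.1 yv zv)) := by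
    have a1 : ent p (fun ω : (Fin K → 𝒳) × (Fin L → 𝒴) × (Fin L → 𝒵) =>
        ((ω.1, (fun i : {ℓ // ℓ ∈ Sᶜ} => ω.2.2 i.1)), (fun i : {ℓ // ℓ ∈ S} => ω.2.2 i.1)))
        = ent p (fun ω => (ω.1, ω.2.2)) := by
      refine ent_comp_inj p (fun ω => (ω.1, ω.2.2))
        (fun t => ((t.1, fun i : {ℓ // ℓ ∈ Sᶜ} => t.2 i.1), fun i : {ℓ // ℓ ∈ S} => t.2 i.1)) ?_
      intro t t' h
      have h1 : t.1 = t'.1 := congrArg (fun v => v.1.1) h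
      have hc : (fun i : {ℓ // ℓ ∈ Sᶜ} => t.2 i.1) = (fun i : {ℓ // ℓ ∈ Sᶜ} => t'.2 i.1) :=
        congrArg (fun v => v.1.2) h
      have hb : (fun i : {ℓ // ℓ ∈ S} => t.2 i.1) = (fun i : {ℓ // ℓ ∈ S} => t'.2 i.1) :=
        congrArg Prod.snd h
      refine Prod.ext h1 (funext fun ℓ => ?_)
      by_cases hℓ : ℓ ∈ S
      · exact congrFun hb ⟨ℓ, hℓ⟩
      · exact congrFun hc ⟨ℓ, Finset.mem_compl.2 hℓ⟩
    have a2 : ent p (fun ω : (Fin K → 𝒳) × (Fin L → 𝒴) × (Fin L → 𝒵) =>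
        ((ω.1, (fun i : {ℓ // ℓ ∈ Sᶜ} => ω.2.2 i.1)), (fun i : {ℓ // ℓ ∈ S} => ω.2.2 i.1)))
        = ent p (fun ω : (Fin K → 𝒳) × (Fin L → 𝒴) × (Fin L → 𝒵) =>
            (ω.1, (fun i : {ℓ // ℓ ∈ Sᶜ} => ω.2.2 i.1)))
          - ∑ u : (Fin K → 𝒳) × ({ℓ // ℓ ∈ Sᶜ} → 𝒵),
              (∑ ω ∈ univ.filter (fun ω : (Fin K → 𝒳) × (Fin L → 𝒴) × (Fin L → 𝒵) =>
                (ω.1, (fun i : {ℓ // ℓ ∈ Sᶜ} => ω.2.2 i.1)) = u), p ω) *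
              ∑ w : {ℓ // ℓ ∈ S} → 𝒵,
                (∏ i : {ℓ // ℓ ∈ S}, ∑ yv, pY i.1 u.1 yv * pZ i.1 yv (w i)) *
                  Real.log (∏ i : {ℓ // ℓ ∈ S}, ∑ yv, pY i.1 u.1 yv * pZ i.1 yv (w i)) :=
      core p (fun ω => (ω.1, (fun i : {ℓ // ℓ ∈ Sᶜ} => ω.2.2 i.1)))
        (fun ω => (fun i : {ℓ // ℓ ∈ S} => ω.2.2 i.1))
        (fun u w => ∏ i : {ℓ // ℓ ∈ S}, ∑ yv, pY i.1 u.1 yv * pZ i.1 yv (w i))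
        (coreH2 pX pY pZ p hpY1 hpZ1 hfac S)
    have a3 : (∑ u : (Fin K → 𝒳) × ({ℓ // ℓ ∈ Sᶜ} → 𝒵),
          (∑ ω ∈ univ.filter (fun ω : (Fin K → 𝒳) × (Fin L → 𝒴) × (Fin L → 𝒵) =>
            (ω.1, (fun i : {ℓ // ℓ ∈ Sᶜ} => ω.2.2 i.1)) = u), p ω) *
          ∑ w : {ℓ // ℓ ∈ S} → 𝒵,
            (∏ i : {ℓ // ℓ ∈ S}, ∑ yv, pY i.1 u.1 yv * pZ i.1 yv (w i)) *
              Real.log (∏ i : {ℓ // ℓ ∈ S}, ∑ yv, pY i.1 u.1 yv * pZ i.1 yv (w i)))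
        = ∑ ω, p ω * ∑ i : {ℓ // ℓ ∈ S},
            ∑ zv, (∑ yv, pY i.1 ω.1 yv * pZ i.1 yv zv) *
              Real.log (∑ yv, pY i.1 ω.1 yv * pZ i.1 yv zv) := by
      have h1 : ∀ u : (Fin K → 𝒳) × ({ℓ // ℓ ∈ Sᶜ} → 𝒵),
          (∑ w : {ℓ // ℓ ∈ S} → 𝒵,
            (∏ i : {ℓ // ℓ ∈ S}, ∑ yv, pY i.1 u.1 yv * pZ i.1 yv (w i)) *
              Real.log (∏ i : {ℓ // ℓ ∈ S}, ∑ yv, pY i.1 u.1 yv * pZ i.1 yv (w i)))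
          = ∑ i : {ℓ // ℓ ∈ S}, ∑ zv, (∑ yv, pY i.1 u.1 yv * pZ i.1 yv zv) *
              Real.log (∑ yv, pY i.1 u.1 yv * pZ i.1 yv zv) := by
        intro u
        refine hprod (ι := {ℓ // ℓ ∈ S}) (κ := 𝒵)
          (fun i zv => ∑ yv, pY i.1 u.1 yv * pZ i.1 yv zv) (fun i => ?_)
        rw [Finset.sum_comm]
        exact eval_one _ _ (hpY1 i.1 u.1) (fun yv => hpZ1 i.1 yv)
      rw [Finset.sum_congr rfl fun u _ => by rw [h1 u]]
      exact sum_fiber p (fun ω => (ω.1, (fun i : {ℓ // ℓ ∈ Sᶜ} => ω.2.2 i.1)))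
        (fun u => ∑ i : {ℓ // ℓ ∈ S}, ∑ zv, (∑ yv, pY i.1 u.1 yv * pZ i.1 yv zv) *
          Real.log (∑ yv, pY i.1 u.1 yv * pZ i.1 yv zv))
    simp only [mi]
    rw [← a1, a2, a3]
  -- E4 : per-ℓ terms
  have hE4 : ∀ ℓ ∈ S, condMI p (fun ω => ω.2.1 ℓ) (fun ω => ω.2.2 ℓ) (fun ω => ω.1)
      = (∑ ω, p ω * ∑ zv, pZ ℓ (ω.2.1 ℓ) zv * Real.log (pZ ℓ (ω.2.1 ℓ) zv))
        - ∑ ω, p ω * ∑ zv, (∑ yv, pY ℓ ω.1 yv * pZ ℓ yv zv) *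
            Real.log (∑ yv, pY ℓ ω.1 yv * pZ ℓ yv zv) := by
    intro ℓ _
    have h4 : ent p (fun ω : (Fin K → 𝒳) × (Fin L → 𝒴) × (Fin L → 𝒵) => (ω.2.1 ℓ, ω.1))
        = ent p (fun ω : (Fin K → 𝒳) × (Fin L → 𝒴) × (Fin L → 𝒵) => (ω.1, ω.2.1 ℓ)) :=
      ent_comp_inj p (fun ω => (ω.1, ω.2.1 ℓ)) (fun t => (t.2, t.1))
        (fun t t' h => Prod.ext (congrArg Prod.snd h) (congrArg Prod.fst h))
    have h5 : ent p (fun ω : (Fin K → 𝒳) × (Fin L → 𝒴) × (Fin L → 𝒵) => (ω.2.2 ℓ, ω.1))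
        = ent p (fun ω => ω.1)
          - ∑ ω, p ω * ∑ zv, (∑ yv, pY ℓ ω.1 yv * pZ ℓ yv zv) *
              Real.log (∑ yv, pY ℓ ω.1 yv * pZ ℓ yv zv) := by
      have b1 : ent p (fun ω : (Fin K → 𝒳) × (Fin L → 𝒴) × (Fin L → 𝒵) => (ω.2.2 ℓ, ω.1))
          = ent p (fun ω : (Fin K → 𝒳) × (Fin L → 𝒴) × (Fin L → 𝒵) => (ω.1, ω.2.2 ℓ)) :=
        ent_comp_inj p (fun ω => (ω.1, ω.2.2 ℓ)) (fun t => (t.2, t.1))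
          (fun t t' h => Prod.ext (congrArg Prod.snd h) (congrArg Prod.fst h))
      have b2 : ent p (fun ω : (Fin K → 𝒳) × (Fin L → 𝒴) × (Fin L → 𝒵) => (ω.1, ω.2.2 ℓ))
          = ent p (fun ω => ω.1)
            - ∑ u : Fin K → 𝒳,
                (∑ ω ∈ univ.filter (fun ω : (Fin K → 𝒳) × (Fin L → 𝒴) × (Fin L → 𝒵) =>
                  ω.1 = u), p ω) *
                ∑ w : 𝒵, (∑ yv, pY ℓ u yv * pZ ℓ yv w) *
                  Real.log (∑ yv, pY ℓ u yv * pZ ℓ yv w) :=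
        core p (fun ω => ω.1) (fun ω => ω.2.2 ℓ)
          (fun u w => ∑ yv, pY ℓ u yv * pZ ℓ yv w)
          (coreH3 pX pY pZ p hpY1 hpZ1 hfac ℓ)
      have b3 : (∑ u : Fin K → 𝒳,
            (∑ ω ∈ univ.filter (fun ω : (Fin K → 𝒳) × (Fin L → 𝒴) × (Fin L → 𝒵) =>
              ω.1 = u), p ω) *
            ∑ w : 𝒵, (∑ yv, pY ℓ u yv * pZ ℓ yv w) *
              Real.log (∑ yv, pY ℓ u yv * pZ ℓ yv w))
          = ∑ ω, p ω * ∑ zv, (∑ yv, pY ℓ ω.1 yv * pZ ℓ yv zv) *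
              Real.log (∑ yv, pY ℓ ω.1 yv * pZ ℓ yv zv) :=
        sum_fiber p (fun ω => ω.1)
          (fun u => ∑ zv, (∑ yv, pY ℓ u yv * pZ ℓ yv zv) *
            Real.log (∑ yv, pY ℓ u yv * pZ ℓ yv zv))
      rw [b1, b2, b3]
    have h6 : ent p (fun ω : (Fin K → 𝒳) × (Fin L → 𝒴) × (Fin L → 𝒵) =>
        (ω.2.1 ℓ, ω.2.2 ℓ, ω.1))
        = ent p (fun ω : (Fin K → 𝒳) × (Fin L → 𝒴) × (Fin L → 𝒵) => (ω.1, ω.2.1 ℓ))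
          - ∑ ω, p ω * ∑ zv, pZ ℓ (ω.2.1 ℓ) zv * Real.log (pZ ℓ (ω.2.1 ℓ) zv) := by
      have b1 : ent p (fun ω : (Fin K → 𝒳) × (Fin L → 𝒴) × (Fin L → 𝒵) =>
          (ω.2.1 ℓ, ω.2.2 ℓ, ω.1))
          = ent p (fun ω : (Fin K → 𝒳) × (Fin L → 𝒴) × (Fin L → 𝒵) =>
            ((ω.1, ω.2.1 ℓ), ω.2.2 ℓ)) := by
        refine ent_comp_inj p (fun ω : (Fin K → 𝒳) × (Fin L → 𝒴) × (Fin L → 𝒵) =>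
            ((ω.1, ω.2.1 ℓ), ω.2.2 ℓ))
          (fun t => (t.1.2, t.2, t.1.1)) ?_
        intro t t' h
        obtain ⟨⟨x, y⟩, z⟩ := t
        obtain ⟨⟨x', y'⟩, z'⟩ := t'
        simp only [Prod.mk.injEq] at h ⊢
        tauto
      have b2 : ent p (fun ω : (Fin K → 𝒳) × (Fin L → 𝒴) × (Fin L → 𝒵) =>
          ((ω.1, ω.2.1 ℓ), ω.2.2 ℓ))
          = ent p (fun ω : (Fin K → 𝒳) × (Fin L → 𝒴) × (Fin L → 𝒵) => (ω.1, ω.2.1 ℓ))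
            - ∑ u : (Fin K → 𝒳) × 𝒴,
                (∑ ω ∈ univ.filter (fun ω : (Fin K → 𝒳) × (Fin L → 𝒴) × (Fin L → 𝒵) =>
                  (ω.1, ω.2.1 ℓ) = u), p ω) *
                ∑ w : 𝒵, pZ ℓ u.2 w * Real.log (pZ ℓ u.2 w) :=
        core p (fun ω => (ω.1, ω.2.1 ℓ)) (fun ω => ω.2.2 ℓ)
          (fun u w => pZ ℓ u.2 w)
          (coreH4 pX pY pZ p hpY1 hpZ1 hfac ℓ)
      have b3 : (∑ u : (Fin K → 𝒳) × 𝒴,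
            (∑ ω ∈ univ.filter (fun ω : (Fin K → 𝒳) × (Fin L → 𝒴) × (Fin L → 𝒵) =>
              (ω.1, ω.2.1 ℓ) = u), p ω) *
            ∑ w : 𝒵, pZ ℓ u.2 w * Real.log (pZ ℓ u.2 w))
          = ∑ ω, p ω * ∑ zv, pZ ℓ (ω.2.1 ℓ) zv * Real.log (pZ ℓ (ω.2.1 ℓ) zv) :=
        sum_fiber p (fun ω => (ω.1, ω.2.1 ℓ))
          (fun u => ∑ zv, pZ ℓ u.2 zv * Real.log (pZ ℓ u.2 zv))
      rw [b1, b2, b3]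
    simp only [condMI]
    rw [h4, h5, h6]
    ring
  rw [hE1, hE2, Finset.sum_congr rfl hE4]
  simp only [mi]
  rw [Finset.sum_sub_distrib]
  have k1 : (∑ ℓ ∈ S, ∑ ω, p ω * ∑ zv, pZ ℓ (ω.2.1 ℓ) zv * Real.log (pZ ℓ (ω.2.1 ℓ) zv))
      = ∑ ω, p ω * ∑ i : {ℓ // ℓ ∈ S},
          ∑ zv, pZ i.1 (ω.2.1 i.1) zv * Real.log (pZ i.1 (ω.2.1 i.1) zv) := by
    rw [Finset.sum_comm]
    refine Finset.sum_congr rfl fun ω _ => ?_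
    rw [← Finset.mul_sum]
    congr 1
    rw [Finset.univ_eq_attach,
      Finset.sum_attach S (fun ℓ => ∑ zv, pZ ℓ (ω.2.1 ℓ) zv * Real.log (pZ ℓ (ω.2.1 ℓ) zv))]
  have k2 : (∑ ℓ ∈ S, ∑ ω, p ω * ∑ zv, (∑ yv, pY ℓ ω.1 yv * pZ ℓ yv zv) *
        Real.log (∑ yv, pY ℓ ω.1 yv * pZ ℓ yv zv))
      = ∑ ω, p ω * ∑ i : {ℓ // ℓ ∈ S},
          ∑ zv, (∑ yv, pY i.1 ω.1 yv * pZ i.1 yv zv) *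
            Real.log (∑ yv, pY i.1 ω.1 yv * pZ i.1 yv zv) := by
    rw [Finset.sum_comm]
    refine Finset.sum_congr rfl fun ω _ => ?_
    rw [← Finset.mul_sum]
    congr 1
    rw [Finset.univ_eq_attach,
      Finset.sum_attach S (fun ℓ => ∑ zv, (∑ yv, pY ℓ ω.1 yv * pZ ℓ yv zv) *
        Real.log (∑ yv, pY ℓ ω.1 yv * pZ ℓ yv zv))]
  rw [k1, k2]
  ring
end

section
/- Let T ⊆ {1,...,K} be nonempty, S ⊆ {1,...,L}, and let |S| ≤ L. Let Σ_ℓ be positive definite N×N Hermitian matrices, H_{ℓ,T} complex matrices, and K_T a positive definite Hermitian M|T| × M|T| matrix. With the choice B_ℓ = (1/2)Σ_ℓ^{-1}, the gap η defined by |T|·η = ∑_{ℓ∈S} log(|Σ_ℓ^{-1}| / |Σ_ℓ^{-1} − B_ℓ|) + log(|∑_{ℓ∈S^c} H_{ℓ,T}^† Σ_ℓ^{-1} H_{ℓ,T} + K_T^{-1}| / |∑_{ℓ∈S^c} H_{ℓ,T}^† B_ℓ H_{ℓ,T} + K_T^{-1}|) satisfies η ≤ (|S|/|T|)·N + M ≤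 N·L + M. -/
open Matrix
open scoped ComplexOrder

lemma posdef_det_re {n : ℕ} {A : Matrix (Fin n) (Fin n) ℂ} (hA : A.PosDef) :
    0 < A.det.re ∧ A.det = (A.det.re : ℂ) := by
  have h := hA.det_pos
  rw [Complex.lt_def] at h
  obtain ⟨h1, h2⟩ := h
  simp only [Complex.zero_re, Complex.zero_im] at h1 h2
  exact ⟨h1, (Complex.ext (by simp) (by simp [← h2])).symm⟩

lemma posSemidef_smul' {n : ℕ} {A : Matrix (Fin n) (Fin n) ℂ} (hA : A.PosSemidef)
    {c : ℝ} (hc : 0 ≤ c) : ((c : ℂ) • A).PosSemidef := by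
  constructor
  · show ((c:ℂ) • A)ᴴ = (c:ℂ) • A
    rw [conjTranspose_smul, hA.1.eq]
    congr 1
    simp [Complex.star_def, Complex.conj_ofReal]
  · intro x
    exact (hA.smul (Complex.zero_le_real.mpr hc)).2 x

lemma posSemidef_sum' {ι : Type*} {n : ℕ} (s : Finset ι)
    (f : ι → Matrix (Fin n) (Fin n) ℂ) (h : ∀ i ∈ s, (f i).PosSemidef) :
    (∑ i ∈ s, f i).PosSemidef := by
  classical
  induction s using Finset.cons_induction with
  | empty => simpa using Matrix.PosSemidef.zero
  | cons a s ha ih =>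
    rw [Finset.sum_cons]
    exact ((h a (Finset.mem_cons_self a s)).add
      (ih fun i hi => h i (Finset.mem_cons_of_mem hi)))

lemma det_one_add_posSemidef {n : ℕ} {C : Matrix (Fin n) (Fin n) ℂ} (hC : C.PosSemidef) :
    ∃ r : ℝ, 1 ≤ r ∧ (1 + C).det = (r : ℂ) := by
  classical
  have hH := hC.1
  set U : Matrix (Fin n) (Fin n) ℂ := (hH.eigenvectorUnitary : Matrix (Fin n) (Fin n) ℂ)
  have hU : U * star U = 1 := Matrix.mem_unitaryGroup_iff.mp hH.eigenvectorUnitary.2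
  have hC' : C = U * Matrix.diagonal (RCLike.ofReal ∘ hH.eigenvalues) * star U :=
    hH.spectral_theorem
  have h1 : (1 : Matrix (Fin n) (Fin n) ℂ) + C
      = U * (1 + Matrix.diagonal (RCLike.ofReal ∘ hH.eigenvalues)) * star U := by
    rw [mul_add, add_mul, mul_one, hU, ← hC']
  refine ⟨∏ i, (1 + hH.eigenvalues i), ?_, ?_⟩
  · calc (1:ℝ) = ∏ _i : Fin n, 1 := by simp
      _ ≤ ∏ i, (1 + hH.eigenvalues i) :=
        Finset.prod_le_prod (by intros; norm_num)
          (fun i _ => by linarith [hC.eigenvalues_nonneg i])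
  · rw [h1, det_mul, det_mul]
    have hdiag : (1 : Matrix (Fin n) (Fin n) ℂ)
          + Matrix.diagonal (RCLike.ofReal ∘ hH.eigenvalues)
        = Matrix.diagonal (fun i => 1 + (hH.eigenvalues i : ℂ)) := by
      rw [← Matrix.diagonal_one, Matrix.diagonal_add]
      rfl
    rw [hdiag, det_diagonal]
    have hUU : U.det * (star U).det = 1 := by rw [← det_mul, hU, det_one]
    push_cast
    calc U.det * (∏ i, (1 + (hH.eigenvalues i : ℂ))) * (star U).det
        = (∏ i, (1 + (hH.eigenvalues i : ℂ))) * (U.det * (star U).det) := by ring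
      _ = ∏ i, (1 + (hH.eigenvalues i : ℂ)) := by rw [hUU, mul_one]

lemma det_re_mono {n : ℕ} {X D : Matrix (Fin n) (Fin n) ℂ}
    (hX : X.PosDef) (hD : D.PosSemidef) : X.det.re ≤ (X + D).det.re := by
  classical
  set R := (open scoped MatrixOrder in CFC.sqrt X) with hRdef
  have hR : R.PosSemidef := by
    open scoped MatrixOrder in exact (CFC.sqrt_nonneg X).posSemidef
  have hRR : R * R = X := by
    open scoped MatrixOrder in exact CFC.sqrt_mul_sqrt_self X hX.posSemidef.nonneg
  have hdet2 : R.det * R.det = X.det := by rw [← det_mul, hRR]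
  have hRdet : IsUnit R.det := by
    refine isUnit_iff_ne_zero.mpr fun h => ?_
    have := hX.det_pos.ne'
    rw [← hdet2, h, mul_zero] at this
    exact this rfl
  have hRinv : R * R⁻¹ = 1 := Matrix.mul_nonsing_inv R hRdet
  have hRinv' : R⁻¹ * R = 1 := Matrix.nonsing_inv_mul R hRdet
  have hC : ((R⁻¹)ᴴ * D * R⁻¹).PosSemidef := hD.conjTranspose_mul_mul_same R⁻¹
  have hHinv : (R⁻¹)ᴴ = R⁻¹ := by
    rw [Matrix.conjTranspose_nonsing_inv, hR.1.eq]
  rw [hHinv] at hC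
  have key : X + D = R * (1 + R⁻¹ * D * R⁻¹) * R := by
    rw [mul_add, mul_one, add_mul, hRR]
    congr 1
    have h2 : R * (R⁻¹ * D * R⁻¹) * R = (R * R⁻¹) * D * (R⁻¹ * R) := by
      noncomm_ring
    rw [h2, hRinv, hRinv', one_mul, mul_one]
  obtain ⟨r, hr1, hr2⟩ := det_one_add_posSemidef hC
  have hXD : (X + D).det = X.det * r := by
    rw [key, det_mul, det_mul, hr2]
    rw [← hdet2]; ring
  rw [hXD, (posdef_det_re hX).2]
  have hx := (posdef_det_re hX).1
  calc X.det.re ≤ X.det.re * r := le_mul_of_one_le_right hx.le hr1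
    _ = ((X.det.re : ℂ) * r).re := by
        simp [← Complex.ofReal_mul]

/-- with the quantization choice B_ℓ = (1/2)Σ_ℓ⁻¹, the per-user gap η
between the cut-set bound and the joint-decoding achievable rate satisfies
η ≤ (|S|/|T|)·N + M ≤ N·L + M. -/
theorem constant_gap_bound {K L M N : ℕ}
    (T : Finset (Fin K)) (hT : T.Nonempty) (S : Finset (Fin L))
    (Sig : Fin L → Matrix (Fin N) (Fin N) ℂ) (hSig : ∀ ℓ, (Sig ℓ).PosDef)
    (H : Fin L → Matrix (Fin N) (Fin (M * T.card)) ℂ)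
    (KT : Matrix (Fin (M * T.card)) (Fin (M * T.card)) ℂ) (hKT : KT.PosDef)
    (B : Fin L → Matrix (Fin N) (Fin N) ℂ)
    (hB : ∀ ℓ, B ℓ = (1 / 2 : ℂ) • (Sig ℓ)⁻¹)
    (η : ℝ)
    (hη : (T.card : ℝ) * η =
      (∑ ℓ ∈ S, Real.logb 2 ((((Sig ℓ)⁻¹).det.re) / (((Sig ℓ)⁻¹ - B ℓ).det.re)))
      + Real.logb 2
          (((∑ ℓ ∈ Sᶜ, (H ℓ)ᴴ * (Sig ℓ)⁻¹ * H ℓ + KT⁻¹).det.re)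
            / ((∑ ℓ ∈ Sᶜ, (H ℓ)ᴴ * B ℓ * H ℓ + KT⁻¹).det.re))) :
    η ≤ ((S.card : ℝ) / (T.card : ℝ)) * N + M ∧
      ((S.card : ℝ) / (T.card : ℝ)) * N + M ≤ (N : ℝ) * L + M := by
  have hTpos : (0:ℝ) < T.card := by exact_mod_cast hT.card_pos
  -- Step A : each term in the sum equals N
  have hstepA : ∀ ℓ ∈ S,
      Real.logb 2 ((((Sig ℓ)⁻¹).det.re) / (((Sig ℓ)⁻¹ - B ℓ).det.re)) = (N : ℝ) := by
    intro ℓ _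
    have hinv : ((Sig ℓ)⁻¹).PosDef := (hSig ℓ).inv
    have hx := (posdef_det_re hinv).1
    have hsub : (Sig ℓ)⁻¹ - B ℓ = (1/2 : ℂ) • (Sig ℓ)⁻¹ := by
      rw [hB ℓ]
      nth_rewrite 1 [← one_smul ℂ ((Sig ℓ)⁻¹)]
      rw [← sub_smul]; norm_num
    have hdet : ((Sig ℓ)⁻¹ - B ℓ).det = ((1/2:ℂ))^N * ((Sig ℓ)⁻¹).det := by
      rw [hsub, det_smul]; simp
    have hre : ((Sig ℓ)⁻¹ - B ℓ).det.re = (1/2:ℝ)^N * ((Sig ℓ)⁻¹).det.re := by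
      rw [hdet, (posdef_det_re hinv).2]
      have hc : ((1/2:ℂ))^N * (((Sig ℓ)⁻¹).det.re : ℂ)
          = (((1/2:ℝ)^N * ((Sig ℓ)⁻¹).det.re : ℝ) : ℂ) := by push_cast; ring
      rw [hc, Complex.ofReal_re]
      simp
    rw [hre]
    have hratio : ((Sig ℓ)⁻¹).det.re / ((1/2:ℝ)^N * ((Sig ℓ)⁻¹).det.re) = 2^N := by
      have h21 : (2:ℝ)^N * ((1/2:ℝ))^N = 1 := by rw [← mul_pow]; norm_num
      rw [div_eq_iff (by positivity), ← mul_assoc, h21, one_mul]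
    rw [hratio, Real.logb_pow, Real.logb_self_eq_one (by norm_num)]
    ring
  have hsumA : (∑ ℓ ∈ S, Real.logb 2 ((((Sig ℓ)⁻¹).det.re) / (((Sig ℓ)⁻¹ - B ℓ).det.re)))
      = (S.card : ℝ) * N := by
    rw [Finset.sum_congr rfl hstepA, Finset.sum_const, nsmul_eq_mul]
  -- Step B
  set P := ∑ ℓ ∈ Sᶜ, (H ℓ)ᴴ * (Sig ℓ)⁻¹ * H ℓ with hPdef
  have hPsd : P.PosSemidef :=
    posSemidef_sum' _ _ fun ℓ _ => ((hSig ℓ).inv.posSemidef).conjTranspose_mul_mul_same (H ℓ)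
  have hKinv : (KT⁻¹).PosDef := hKT.inv
  have hBsum : ∑ ℓ ∈ Sᶜ, (H ℓ)ᴴ * B ℓ * H ℓ = (1/2:ℂ) • P := by
    rw [Finset.smul_sum]
    refine Finset.sum_congr rfl fun ℓ _ => ?_
    rw [hB ℓ, Matrix.mul_smul, Matrix.smul_mul]
  have hX : (P + KT⁻¹).PosDef := Matrix.PosDef.posSemidef_add hPsd hKinv
  have hhalf : ((1/2:ℂ) • P).PosSemidef := by
    have := posSemidef_smul' hPsd (c := 1/2) (by norm_num)
    have hcast : (((1/2:ℝ)):ℂ) = (1/2:ℂ) := by norm_num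
    rwa [hcast] at this
  have hY : ((1/2:ℂ) • P + KT⁻¹).PosDef := Matrix.PosDef.posSemidef_add hhalf hKinv
  have h2Y : (2:ℂ) • ((1/2:ℂ) • P + KT⁻¹) = (P + KT⁻¹) + KT⁻¹ := by
    rw [smul_add, smul_smul]
    norm_num
    rw [two_smul, add_assoc]
  have hxpos := (posdef_det_re hX).1
  have hypos := (posdef_det_re hY).1
  have hmono : (P + KT⁻¹).det.re ≤ 2^(M*T.card) * ((1/2:ℂ) • P + KT⁻¹).det.re := by
    have h1 : (P + KT⁻¹).det.re ≤ ((P + KT⁻¹) + KT⁻¹).det.re :=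
      det_re_mono hX hKinv.posSemidef
    have h2 : ((P + KT⁻¹) + KT⁻¹).det = (2:ℂ)^(M*T.card) * ((1/2:ℂ) • P + KT⁻¹).det := by
      rw [← h2Y, det_smul]; simp
    have h3 : ((P + KT⁻¹) + KT⁻¹).det.re
        = 2^(M*T.card) * ((1/2:ℂ) • P + KT⁻¹).det.re := by
      rw [h2, (posdef_det_re hY).2]
      have hc : ((2:ℂ))^(M*T.card) * ((((1/2:ℂ) • P + KT⁻¹).det.re : ℝ) : ℂ)
          = (((2:ℝ)^(M*T.card) * (((1/2:ℂ) • P + KT⁻¹).det.re) : ℝ) : ℂ) := by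
        push_cast; ring
      rw [hc, Complex.ofReal_re]
      simp
    rw [← h3]; exact h1
  have hstepB : Real.logb 2 (((P + KT⁻¹).det.re) / ((∑ ℓ ∈ Sᶜ, (H ℓ)ᴴ * B ℓ * H ℓ + KT⁻¹).det.re))
      ≤ ((M*T.card : ℕ) : ℝ) := by
    rw [hBsum]
    have hratio : (P + KT⁻¹).det.re / (((1/2:ℂ) • P + KT⁻¹).det.re) ≤ 2^(M*T.card) := by
      rw [div_le_iff₀ hypos]; exact hmono
    calc Real.logb 2 ((P + KT⁻¹).det.re / (((1/2:ℂ) • P + KT⁻¹).det.re))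
        ≤ Real.logb 2 (2^(M*T.card)) := by
          apply (Real.logb_le_logb (by norm_num) (by positivity) (by positivity)).mpr hratio
      _ = ((M*T.card : ℕ) : ℝ) := by
          rw [Real.logb_pow, Real.logb_self_eq_one (by norm_num)]; ring
  -- combine
  rw [hsumA] at hη
  have hmain : (T.card : ℝ) * η ≤ (S.card : ℝ) * N + (M : ℝ) * T.card := by
    rw [hη]
    have := hstepB
    push_cast at this
    linarith
  constructor
  · have hmain' : η ≤ ((S.card : ℝ) * N + (M : ℝ) * T.card) / T.card := by
      rw [le_div_iff₀ hTpos, mul_comm]; exact hmain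
    calc η ≤ ((S.card : ℝ) * N + (M : ℝ) * T.card) / T.card := hmain'
      _ = ((S.card : ℝ) / (T.card : ℝ)) * N + M := by field_simp
  · have hS : (S.card : ℝ) ≤ L := by
      exact_mod_cast (S.card_le_univ).trans_eq (by simp)
    have hT1 : (1:ℝ) ≤ T.card := by exact_mod_cast hT.card_pos
    have hdiv : (S.card : ℝ) / (T.card : ℝ) ≤ L :=
      (div_le_self (by positivity) hT1).trans hS
    have : ((S.card : ℝ) / (T.card : ℝ)) * N ≤ (L:ℝ) * N :=
      mul_le_mul_of_nonneg_right hdiv (by positivity)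
    linarith [this]
end
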